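/- arXiv:1012.2033 — 10 statements merged into one kernel-verified Lean document; each statement's English description precedes it below -/
import Mathlib

section
/- Let γ > 1, K > 0, ξ ∈ ℝ, T ∈ (0,∞], and let a : [0,T) → ℝ be twice continuously differentiable with a(t) > 0 for all t, b : [0,T) → ℝ twice continuously differentiable, and W : [0,T) → ℝ continuously differentiable, satisfying for all t ∈ [0,T): (i) a''(t) = ξ / a(t)^γ; (ii) b''(t) + (1+γ)(a'(t)/a(t)) b'(t) + [2ξ/a(t)^{γ+1} + (γ−1) a'(t)²/a(t)²] b(t) = 0; (iii) W'(t) + (γ−1) W(t) a'(t)/a(t) − ((γ−1)/(Kγ)) [b'(t) + b(t) a'(t)/a(t)] b(t) = 0. Define R(x,t) = W(t) − ((γ−1)/(Kγ))[b'(t) + b(t)a'(t)/a(t)] x − ((γ−1)ξ/(2Kγ a(t)^{γ+1})) x², u(x,t) = (a'(t)/a(t)) x + b(t), and ρ(x,t) = R(x,t)^{1/(γ−1)}. Then at every point (x,t) with R(x,t) > 0, the pair (ρ,u) satisfies the 1-dimensional compressible Euler equations: ∂_t ρ(x,t) + ∂_x(ρ u)(x,t) = 0 and ∂_t(ρ u)(x,t)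 + ∂_x(ρ u² + K ρ^γ)(x,t) = 0. -/
open Real Set Filter Topology
open scoped ENNReal

set_option maxHeartbeats 2000000 in
/-- Perturbational solutions to the 1-dimensional compressible Euler equations:
with `a` solving the Emden equation, `b` the second-order linear ODE and
`W` (playing the role of `ρ^{γ-1}(0,·)`) the first-order ODE, the pair
`(ρ, u)` with `u(x,t) = (a'(t)/a(t)) x + b(t)` and `ρ = R^{1/(γ-1)}` solves
the Euler system wherever `R > 0`. -/
theorem perturbational_blowup_solutions_euler
    (γ K ξ : ℝ) (hγ : 1 < γ) (hK : 0 < K)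
    (T : ℝ≥0∞) (hT : 0 < T)
    (D : Set ℝ) (hD : D = {t : ℝ | 0 ≤ t ∧ ENNReal.ofReal t < T})
    (a a' a'' b b' b'' W W' : ℝ → ℝ)
    (ha : ∀ t ∈ D, HasDerivAt a (a' t) t)
    (ha' : ∀ t ∈ D, HasDerivAt a' (a'' t) t)
    (ha''c : ContinuousOn a'' D)
    (hb : ∀ t ∈ D, HasDerivAt b (b' t) t)
    (hb' : ∀ t ∈ D, HasDerivAt b' (b'' t) t)
    (hb''c : ContinuousOn b'' D)
    (hW : ∀ t ∈ D, HasDerivAt W (W' t) t)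
    (hW'c : ContinuousOn W' D)
    (hapos : ∀ t ∈ D, 0 < a t)
    (hEmden : ∀ t ∈ D, a'' t = ξ / a t ^ γ)
    (hbODE : ∀ t ∈ D, b'' t + (1 + γ) * (a' t / a t) * b' t
        + (2 * ξ / a t ^ (γ + 1) + (γ - 1) * (a' t) ^ 2 / (a t) ^ 2) * b t = 0)
    (hWODE : ∀ t ∈ D, W' t + (γ - 1) * W t * (a' t / a t)
        - ((γ - 1) / (K * γ)) * (b' t + b t * (a' t / a t)) * b t = 0)
    (R u ρ : ℝ → ℝ → ℝ)
    (hR : R = fun x t => W t - ((γ - 1) / (K * γ)) * (b' t + b t * (a' t / a t)) * x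
        - ((γ - 1) * ξ / (2 * K * γ * a t ^ (γ + 1))) * x ^ 2)
    (hu : u = fun x t => (a' t / a t) * x + b t)
    (hρ : ρ = fun x t => R x t ^ ((1 : ℝ) / (γ - 1)))
    (x t : ℝ) (ht : t ∈ D) (hRpos : 0 < R x t) :
    deriv (fun τ => ρ x τ) t + deriv (fun y => ρ y t * u y t) x = 0 ∧
      deriv (fun τ => ρ x τ * u x τ) t
        + deriv (fun y => ρ y t * u y t ^ 2 + K * ρ y t ^ γ) x = 0 := by
  subst hρ hu hR
  beta_reduce
  beta_reduce at hRpos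
  have hA := hapos t ht
  have hAne : a t ≠ 0 := hA.ne'
  have hGpos : (0:ℝ) < a t ^ γ := Real.rpow_pos_of_pos hA γ
  have hGne : a t ^ γ ≠ 0 := hGpos.ne'
  have hγ1 : γ - 1 ≠ 0 := sub_ne_zero.mpr hγ.ne'
  have hγ0 : γ ≠ 0 := by positivity
  have hKne : K ≠ 0 := hK.ne'
  have hat := ha t ht
  have hat' := ha' t ht
  have hbt := hb t ht
  have hbt' := hb' t ht
  have hWt := hW t ht
  have hsplit : a t ^ (γ + 1) = a t ^ γ * a t := by
    rw [Real.rpow_add hA, Real.rpow_one]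
  -- derivative of a^(γ+1)
  have hAp : HasDerivAt (fun τ => a τ ^ (γ + 1)) (a' t * (γ + 1) * a t ^ γ) t := by
    have h := hat.rpow_const (p := γ + 1) (Or.inl hAne)
    have e : γ + 1 - 1 = γ := by ring
    rwa [e] at h
  have hq : HasDerivAt (fun τ => a' τ / a τ)
      ((a'' t * a t - a' t * a' t) / a t ^ 2) t := hat'.div hat hAne
  have hc1 : HasDerivAt (fun τ => b' τ + b τ * (a' τ / a τ))
      (b'' t + (b' t * (a' t / a t) + b t * ((a'' t * a t - a' t * a' t) / a t ^ 2))) t :=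
    hbt'.add (hbt.mul hq)
  have hden : 2 * K * γ * a t ^ (γ + 1) ≠ 0 := by
    rw [hsplit]; positivity
  have hc2 : HasDerivAt (fun τ => (γ - 1) * ξ / (2 * K * γ * a τ ^ (γ + 1)))
      ((0 * (2 * K * γ * a t ^ (γ + 1)) - (γ - 1) * ξ * (2 * K * γ * (a' t * (γ + 1) * a t ^ γ)))
        / (2 * K * γ * a t ^ (γ + 1)) ^ 2) t :=
    (hasDerivAt_const t ((γ - 1) * ξ)).div (hAp.const_mul (2 * K * γ)) hden
  have hRt : HasDerivAt (fun τ => W τ - (γ - 1) / (K * γ) * (b' τ + b τ * (a' τ / a τ)) * x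
      - (γ - 1) * ξ / (2 * K * γ * a τ ^ (γ + 1)) * x ^ 2)
      (W' t - (γ - 1) / (K * γ) * (b'' t + (b' t * (a' t / a t)
          + b t * ((a'' t * a t - a' t * a' t) / a t ^ 2))) * x
        - (0 * (2 * K * γ * a t ^ (γ + 1)) - (γ - 1) * ξ * (2 * K * γ * (a' t * (γ + 1) * a t ^ γ)))
          / (2 * K * γ * a t ^ (γ + 1)) ^ 2 * x ^ 2) t :=
    (hWt.sub ((hc1.const_mul ((γ - 1) / (K * γ))).mul_const x)).sub (hc2.mul_const (x ^ 2))
  have hut : HasDerivAt (fun τ => a' τ / a τ * x + b τ)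
      ((a'' t * a t - a' t * a' t) / a t ^ 2 * x + b' t) t := (hq.mul_const x).add hbt
  -- space derivatives
  -- base space derivative of R · t
  have hRxb : HasDerivAt (fun y => W t - (γ - 1) / (K * γ) * (b' t + b t * (a' t / a t)) * y - (γ - 1) * ξ / (2 * K * γ * a t ^ (γ + 1)) * y ^ 2) (0 - (γ - 1) / (K * γ) * (b' t + b t * (a' t / a t)) * 1 - (γ - 1) * ξ / (2 * K * γ * a t ^ (γ + 1)) * (((2:ℕ):ℝ) * x ^ (2 - 1 : ℕ))) x :=
    ((hasDerivAt_const x (W t)).sub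
        ((hasDerivAt_id x).const_mul ((γ - 1) / (K * γ) * (b' t + b t * (a' t / a t))))).sub
      ((hasDerivAt_pow 2 x).const_mul ((γ - 1) * ξ / (2 * K * γ * a t ^ (γ + 1))))
  have hUyb : HasDerivAt (fun y => a' t / a t * y + b t) (a' t / a t * 1) x :=
    ((hasDerivAt_id x).const_mul (a' t / a t)).add_const (b t)
  have hρpos : (0:ℝ) < (W t - (γ - 1) / (K * γ) * (b' t + b t * (a' t / a t)) * x - (γ - 1) * ξ / (2 * K * γ * a t ^ (γ + 1)) * x ^ 2) ^ ((1 : ℝ) / (γ - 1)) := Real.rpow_pos_of_pos hRpos _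
  -- the four composite derivatives, stated in beta-normal form
  have Hρt : HasDerivAt (fun τ => (W τ - (γ - 1) / (K * γ) * (b' τ + b τ * (a' τ / a τ)) * x - (γ - 1) * ξ / (2 * K * γ * a τ ^ (γ + 1)) * x ^ 2) ^ ((1 : ℝ) / (γ - 1))) ((W' t - (γ - 1) / (K * γ) * (b'' t + (b' t * (a' t / a t) + b t * ((a'' t * a t - a' t * a' t) / a t ^ 2))) * x - (0 * (2 * K * γ * a t ^ (γ + 1)) - (γ - 1) * ξ * (2 * K * γ * (a' t * (γ + 1) * a t ^ γ))) / (2 * K * γ * a t ^ (γ + 1)) ^ 2 * x ^ 2) * ((1 : ℝ) / (γ - 1)) * (W t - (γ - 1) / (K * γ) * (b' t + b t * (a' t / a t)) * x - (γ - 1) * ξ / (2 * K * γ * a t ^ (γ + 1)) * x ^ 2) ^ (((1 : ℝ) / (γ - 1)) - 1)) t := by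
    exact hRt.rpow_const (Or.inl hRpos.ne')
  have Hρx : HasDerivAt (fun y => (W t - (γ - 1) / (K * γ) * (b' t + b t * (a' t / a t)) * y - (γ - 1) * ξ / (2 * K * γ * a t ^ (γ + 1)) * y ^ 2) ^ ((1 : ℝ) / (γ - 1))) ((0 - (γ - 1) / (K * γ) * (b' t + b t * (a' t / a t)) * 1 - (γ - 1) * ξ / (2 * K * γ * a t ^ (γ + 1)) * (((2:ℕ):ℝ) * x ^ (2 - 1 : ℕ))) * ((1 : ℝ) / (γ - 1)) * (W t - (γ - 1) / (K * γ) * (b' t + b t * (a' t / a t)) * x - (γ - 1) * ξ / (2 * K * γ * a t ^ (γ + 1)) * x ^ 2) ^ (((1 : ℝ) / (γ - 1)) - 1)) x := by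
    exact hRxb.rpow_const (Or.inl hRpos.ne')
  have Hmt : HasDerivAt (fun τ => (W τ - (γ - 1) / (K * γ) * (b' τ + b τ * (a' τ / a τ)) * x - (γ - 1) * ξ / (2 * K * γ * a τ ^ (γ + 1)) * x ^ 2) ^ ((1 : ℝ) / (γ - 1)) * (a' τ / a τ * x + b τ))
      (((W' t - (γ - 1) / (K * γ) * (b'' t + (b' t * (a' t / a t) + b t * ((a'' t * a t - a' t * a' t) / a t ^ 2))) * x - (0 * (2 * K * γ * a t ^ (γ + 1)) - (γ - 1) * ξ * (2 * K * γ * (a' t * (γ + 1) * a t ^ γ))) / (2 * K * γ * a t ^ (γ + 1)) ^ 2 * x ^ 2) * ((1 : ℝ) / (γ - 1)) * (W t - (γ - 1) / (K * γ) * (b' t + b t * (a' t / a t)) * x - (γ - 1) * ξ / (2 * K * γ * a t ^ (γ + 1)) * x ^ 2) ^ (((1 : ℝ) / (γ - 1)) - 1)) * (a' t / a t * x + b t) + (W t - (γ - 1) / (K * γ) * (b' t + b t * (a' t / a t)) * x - (γ - 1) * ξ / (2 * K * γ * a t ^ (γ + 1)) * x ^ 2) ^ ((1 : ℝ) / (γ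 - 1)) * ((a'' t * a t - a' t * a' t) / a t ^ 2 * x + b' t)) t := by
    exact Hρt.mul hut
  have Hms : HasDerivAt (fun y => (W t - (γ - 1) / (K * γ) * (b' t + b t * (a' t / a t)) * y - (γ - 1) * ξ / (2 * K * γ * a t ^ (γ + 1)) * y ^ 2) ^ ((1 : ℝ) / (γ - 1)) * (a' t / a t * y + b t))
      (((0 - (γ - 1) / (K * γ) * (b' t + b t * (a' t / a t)) * 1 - (γ - 1) * ξ / (2 * K * γ * a t ^ (γ + 1)) * (((2:ℕ):ℝ) * x ^ (2 - 1 : ℕ))) * ((1 : ℝ) / (γ - 1)) * (W t - (γ - 1) / (K * γ) * (b' t + b t * (a' t / a t)) * x - (γ - 1) * ξ / (2 * K * γ * a t ^ (γ + 1)) * x ^ 2) ^ (((1 : ℝ) / (γ - 1)) - 1)) * (a' t / a t * x + b t) + (W t - (γ - 1) / (K * γ) * (b' t + b t * (a' t / a t)) * x - (γ - 1) * ξ / (2 * K * γ * a t ^ (γ + 1)) * x ^ 2) ^ ((1 : ℝ) / (γ - 1)) * (a' t / a t * 1)) x := by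
    exact Hρx.mul hUyb
  have Hmo : HasDerivAt
      (fun y => (W t - (γ - 1) / (K * γ) * (b' t + b t * (a' t / a t)) * y - (γ - 1) * ξ / (2 * K * γ * a t ^ (γ + 1)) * y ^ 2) ^ ((1 : ℝ) / (γ - 1)) * (a' t / a t * y + b t) ^ 2 + K * ((W t - (γ - 1) / (K * γ) * (b' t + b t * (a' t / a t)) * y - (γ - 1) * ξ / (2 * K * γ * a t ^ (γ + 1)) * y ^ 2) ^ ((1 : ℝ) / (γ - 1))) ^ γ)
      ((((0 - (γ - 1) / (K * γ) * (b' t + b t * (a' t / a t)) * 1 - (γ - 1) * ξ / (2 * K * γ * a t ^ (γ + 1)) * (((2:ℕ):ℝ) * x ^ (2 - 1 : ℕ))) * ((1 : ℝ) / (γ - 1)) * (W t - (γ - 1) / (K * γ) * (b' t + b t * (a' t / a t)) * x - (γ - 1) * ξ / (2 * K * γ * a t ^ (γ + 1)) * x ^ 2) ^ (((1 : ℝ) / (γ - 1)) - 1)) * (a' t / a t * x + b t) ^ 2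
          + (W t - (γ - 1) / (K * γ) * (b' t + b t * (a' t / a t)) * x - (γ - 1) * ξ / (2 * K * γ * a t ^ (γ + 1)) * x ^ 2) ^ ((1 : ℝ) / (γ - 1)) * (((2:ℕ):ℝ) * (a' t / a t * x + b t) ^ (2 - 1 : ℕ) * (a' t / a t * 1)))
        + K * (((0 - (γ - 1) / (K * γ) * (b' t + b t * (a' t / a t)) * 1 - (γ - 1) * ξ / (2 * K * γ * a t ^ (γ + 1)) * (((2:ℕ):ℝ) * x ^ (2 - 1 : ℕ))) * ((1 : ℝ) / (γ - 1)) * (W t - (γ - 1) / (K * γ) * (b' t + b t * (a' t / a t)) * x - (γ - 1) * ξ / (2 * K * γ * a t ^ (γ + 1)) * x ^ 2) ^ (((1 : ℝ) / (γ - 1)) - 1)) * γ * ((W t - (γ - 1) / (K * γ) * (b' t + b t * (a' t / a t)) * x - (γ - 1) * ξ / (2 * K * γ * a t ^ (γ + 1)) * x ^ 2) ^ ((1 : ℝ) / (γ - 1))) ^ (γ - 1))) x := by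
    exact (Hρx.mul (hUyb.pow 2)).add
      ((Hρx.rpow_const (Or.inl hρpos.ne')).const_mul K)
  constructor
  · rw [Hρt.deriv, Hms.deriv]
    rw [hEmden t ht, hsplit]
    rw [hsplit] at hRpos
    have hRne : (W t - (γ - 1) / (K * γ) * (b' t + b t * (a' t / a t)) * x - (γ - 1) * ξ / (2 * K * γ * (a t ^ γ * a t)) * x ^ 2) ≠ 0 := ne_of_gt hRpos
    have e2 := hbODE t ht
    rw [hsplit] at e2
    have e3 := hWODE t ht
    have hbpp : b'' t = -((1 + γ) * (a' t / a t) * b' t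
        + (2 * ξ / (a t ^ γ * a t) + (γ - 1) * a' t ^ 2 / a t ^ 2) * b t) := by linarith
    have hWp : W' t = -((γ - 1) * W t * (a' t / a t))
        + (γ - 1) / (K * γ) * (b' t + b t * (a' t / a t)) * b t := by linarith
    have hQR : (W t - (γ - 1) / (K * γ) * (b' t + b t * (a' t / a t)) * x - (γ - 1) * ξ / (2 * K * γ * (a t ^ γ * a t)) * x ^ 2) ^ ((1 : ℝ) / (γ - 1) - 1) * (W t - (γ - 1) / (K * γ) * (b' t + b t * (a' t / a t)) * x - (γ - 1) * ξ / (2 * K * γ * (a t ^ γ * a t)) * x ^ 2) = (W t - (γ - 1) / (K * γ) * (b' t + b t * (a' t / a t)) * x - (γ - 1) * ξ / (2 * K * γ * (a t ^ γ * a t)) * x ^ 2) ^ ((1 : ℝ) / (γ - 1)) := by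
      rw [← Real.rpow_add_one hRne]
      norm_num
    have key : ((1 : ℝ) / (γ - 1)) * (W' t - (γ - 1) / (K * γ) * (b'' t + (b' t * (a' t / a t) + b t * ((ξ / a t ^ γ * a t - a' t * a' t) / a t ^ 2))) * x - (0 * (2 * K * γ * (a t ^ γ * a t)) - (γ - 1) * ξ * (2 * K * γ * (a' t * (γ + 1) * a t ^ γ))) / (2 * K * γ * (a t ^ γ * a t)) ^ 2 * x ^ 2) + ((1 : ℝ) / (γ - 1)) * (a' t / a t * x + b t) * (0 - (γ - 1) / (K * γ) * (b' t + b t * (a' t / a t)) * 1 - (γ - 1) * ξ / (2 * K * γ * (a t ^ γ * a t)) * (((2:ℕ):ℝ) * x ^ (2 - 1 : ℕ))) + a' t / a t * (W t - (γ - 1) / (K * γ) * (b' t + b t * (a' t / a t)) * x - (γ - 1) * ξ / (2 * K * γ * (a t ^ γ * a t)) * x ^ 2) = 0 := by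
      rw [hbpp, hWp]
      field_simp
      ring
    set P := (W t - (γ - 1) / (K * γ) * (b' t + b t * (a' t / a t)) * x - (γ - 1) * ξ / (2 * K * γ * (a t ^ γ * a t)) * x ^ 2) ^ ((1 : ℝ) / (γ - 1)) with hPd
    set Q := (W t - (γ - 1) / (K * γ) * (b' t + b t * (a' t / a t)) * x - (γ - 1) * ξ / (2 * K * γ * (a t ^ γ * a t)) * x ^ 2) ^ ((1 : ℝ) / (γ - 1) - 1) with hQd
    linear_combination Q * key - a' t / a t * hQR
  · rw [Hmt.deriv, Hmo.deriv]
    rw [hEmden t ht, hsplit]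
    rw [hsplit] at hRpos
    have hRne : (W t - (γ - 1) / (K * γ) * (b' t + b t * (a' t / a t)) * x - (γ - 1) * ξ / (2 * K * γ * (a t ^ γ * a t)) * x ^ 2) ≠ 0 := ne_of_gt hRpos
    have e2 := hbODE t ht
    rw [hsplit] at e2
    have e3 := hWODE t ht
    have hbpp : b'' t = -((1 + γ) * (a' t / a t) * b' t
        + (2 * ξ / (a t ^ γ * a t) + (γ - 1) * a' t ^ 2 / a t ^ 2) * b t) := by linarith
    have hWp : W' t = -((γ - 1) * W t * (a' t / a t))
        + (γ - 1) / (K * γ) * (b' t + b t * (a' t / a t)) * b t := by linarith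
    have hQR : (W t - (γ - 1) / (K * γ) * (b' t + b t * (a' t / a t)) * x - (γ - 1) * ξ / (2 * K * γ * (a t ^ γ * a t)) * x ^ 2) ^ ((1 : ℝ) / (γ - 1) - 1) * (W t - (γ - 1) / (K * γ) * (b' t + b t * (a' t / a t)) * x - (γ - 1) * ξ / (2 * K * γ * (a t ^ γ * a t)) * x ^ 2) = (W t - (γ - 1) / (K * γ) * (b' t + b t * (a' t / a t)) * x - (γ - 1) * ξ / (2 * K * γ * (a t ^ γ * a t)) * x ^ 2) ^ ((1 : ℝ) / (γ - 1)) := by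
      rw [← Real.rpow_add_one hRne]
      norm_num
    have key : ((1 : ℝ) / (γ - 1)) * (W' t - (γ - 1) / (K * γ) * (b'' t + (b' t * (a' t / a t) + b t * ((ξ / a t ^ γ * a t - a' t * a' t) / a t ^ 2))) * x - (0 * (2 * K * γ * (a t ^ γ * a t)) - (γ - 1) * ξ * (2 * K * γ * (a' t * (γ + 1) * a t ^ γ))) / (2 * K * γ * (a t ^ γ * a t)) ^ 2 * x ^ 2) + ((1 : ℝ) / (γ - 1)) * (a' t / a t * x + b t) * (0 - (γ - 1) / (K * γ) * (b' t + b t * (a' t / a t)) * 1 - (γ - 1) * ξ / (2 * K * γ * (a t ^ γ * a t)) * (((2:ℕ):ℝ) * x ^ (2 - 1 : ℕ))) + a' t / a t * (W t - (γ - 1) / (K * γ) * (b' t + b t * (a' t / a t)) * x - (γ - 1) * ξ / (2 * K * γ * (a t ^ γ * a t)) * x ^ 2) = 0 := by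
      rw [hbpp, hWp]
      field_simp
      ring
    have hPg : ((W t - (γ - 1) / (K * γ) * (b' t + b t * (a' t / a t)) * x - (γ - 1) * ξ / (2 * K * γ * (a t ^ γ * a t)) * x ^ 2) ^ ((1 : ℝ) / (γ - 1))) ^ (γ - 1) = (W t - (γ - 1) / (K * γ) * (b' t + b t * (a' t / a t)) * x - (γ - 1) * ξ / (2 * K * γ * (a t ^ γ * a t)) * x ^ 2) := by
      rw [← Real.rpow_mul hRpos.le, one_div_mul_cancel hγ1, Real.rpow_one]
    rw [hPg]
    have keyM2 : ((ξ / a t ^ γ * a t - a' t * a' t) / a t ^ 2 * x + b' t) + (a' t / a t * x + b t) * (a' t / a t) + K * γ * ((1 : ℝ) / (γ - 1)) * (0 - (γ - 1) / (K * γ) * (b' t + b t * (a' t / a t)) * 1 - (γ - 1) * ξ / (2 * K * γ * (a t ^ γ * a t)) * (((2:ℕ):ℝ) * x ^ (2 - 1 : ℕ))) = 0 := by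
      field_simp
      ring
    set P := (W t - (γ - 1) / (K * γ) * (b' t + b t * (a' t / a t)) * x - (γ - 1) * ξ / (2 * K * γ * (a t ^ γ * a t)) * x ^ 2) ^ ((1 : ℝ) / (γ - 1)) with hPd
    set Q := (W t - (γ - 1) / (K * γ) * (b' t + b t * (a' t / a t)) * x - (γ - 1) * ξ / (2 * K * γ * (a t ^ γ * a t)) * x ^ 2) ^ ((1 : ℝ) / (γ - 1) - 1) with hQd
    linear_combination (Q * (a' t / a t * x + b t)) * key
      + (K * γ * ((1 : ℝ) / (γ - 1)) * (0 - (γ - 1) / (K * γ) * (b' t + b t * (a' t / a t)) * 1 - (γ - 1) * ξ / (2 * K * γ * (a t ^ γ * a t)) * (((2:ℕ):ℝ) * x ^ (2 - 1 : ℕ))) - (a' t / a t * x + b t) * (a' t / a t)) * hQR + P * keyM2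
end

section
/- Let γ > 1, K > 0, ξ ∈ ℝ, T ∈ (0,∞], and let a : [0,T) → ℝ be twice continuously differentiable with a(t) > 0 for all t and a''(t) = ξ / a(t)^γ for all t, let b : [0,T) → ℝ be continuously differentiable and W : [0,T) → ℝ any function. Define R(x,t) = W(t) − ((γ−1)/(Kγ))[b'(t) + b(t)a'(t)/a(t)] x − ((γ−1)ξ/(2Kγ a(t)^{γ+1})) x² and u(x,t) = (a'(t)/a(t)) x + b(t). Then for every (x,t) ∈ ℝ × [0,T), the momentum balance in the form ∂_t u(x,t) + u(x,t) ∂_x u(x,t) + (Kγ/(γ−1)) ∂_x R(x,t) = 0 holds; in particular, wherever R > 0 and ρ = R^{1/(γ−1)}, the momentum equation ρ(u_t + u u_x) + ∂_x(Kρ^γ) = 0 of the compressible Euler equations is satisfied. -/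
open Filter Topology
open scoped ENNReal

/-!
For the linear velocity `u = (a'/a) x + b` the material acceleration `u_t + u u_x` is
`(a''/a) x + b' + b a'/a`, affine in `x`. The Emden equation turns its slope into
`ξ / a^(γ+1)`, which is exactly what the quadratic coefficient of `R` cancels, while the
linear coefficient of `R` cancels `b' + b a'/a`. The Euler form follows by multiplying by `ρ`,
since `∂ₓ(K ρ^γ) = (Kγ/(γ-1)) ρ ∂ₓR` when `ρ = R^(1/(γ-1))`.
-/

lemma hasDerivAt_const_sub_mul_sub_mul_sq (w c₁ c₂ x : ℝ) :
    HasDerivAt (fun y => w - c₁ * y - c₂ * y ^ 2) (-c₁ - c₂ * (2 * x)) x :=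
  ((((hasDerivAt_id' x).const_mul c₁).const_sub w).sub
    ((hasDerivAt_pow 2 x).const_mul c₂)).congr_deriv (by ring)

lemma linear_velocity_acceleration {a a' b : ℝ → ℝ} {a'' b' t : ℝ} (x : ℝ)
    (ha : HasDerivAt a (a' t) t) (ha' : HasDerivAt a' a'' t) (hb : HasDerivAt b b' t)
    (h0 : a t ≠ 0) :
    deriv (fun τ => a' τ / a τ * x + b τ) t
        + (a' t / a t * x + b t) * deriv (fun y => a' t / a t * y + b t) x
      = a'' / a t * x + b' + b t * (a' t / a t) := by
  have hu_t : HasDerivAt (fun τ => a' τ / a τ * x + b τ)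
      ((a'' * a t - a' t * a' t) / a t ^ 2 * x + b') t :=
    ((ha'.div ha h0).mul_const x).add hb
  have hu_x : HasDerivAt (fun y => a' t / a t * y + b t) (a' t / a t) x := by
    simpa using ((hasDerivAt_id x).const_mul (a' t / a t)).add_const (b t)
  rw [hu_t.deriv, hu_x.deriv]
  field_simp
  ring

lemma emden_momentum_balance {a a' b : ℝ → ℝ} {b' t γ K ξ w : ℝ} (x : ℝ)
    (hγ₀ : γ ≠ 0) (hγ₁ : γ ≠ 1) (hK : K ≠ 0)
    (ha : HasDerivAt a (a' t) t) (ha' : HasDerivAt a' (ξ / a t ^ γ) t)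
    (hb : HasDerivAt b b' t) (hpos : 0 < a t) :
    deriv (fun τ => a' τ / a τ * x + b τ) t
        + (a' t / a t * x + b t) * deriv (fun y => a' t / a t * y + b t) x
        + K * γ / (γ - 1) * deriv (fun y => w - (γ - 1) / (K * γ) * (b' + b t * (a' t / a t)) * y
            - (γ - 1) * ξ / (2 * K * γ * a t ^ (γ + 1)) * y ^ 2) x = 0 := by
  have hγ₁' : γ - 1 ≠ 0 := sub_ne_zero.mpr hγ₁
  rw [linear_velocity_acceleration x ha ha' hb hpos.ne',
    (hasDerivAt_const_sub_mul_sub_mul_sq _ _ _ x).deriv, Real.rpow_add_one hpos.ne']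
  field_simp
  ring

lemma hasDerivAt_rpow_one_div_sub_one_rpow {f : ℝ → ℝ} {f' x γ : ℝ} (hγ : γ ≠ 1)
    (hf : HasDerivAt f f' x) (hx : 0 < f x) :
    HasDerivAt (fun y => (f y ^ (1 / (γ - 1))) ^ γ) (γ / (γ - 1) * f x ^ (1 / (γ - 1)) * f') x := by
  have hγ₁ : γ - 1 ≠ 0 := sub_ne_zero.mpr hγ
  have hexp : 1 / (γ - 1) * γ = γ / (γ - 1) := by ring
  have hexp' : γ / (γ - 1) - 1 = 1 / (γ - 1) := by field_simp; ring
  have hloc : (fun y => f y ^ (γ / (γ - 1))) =ᶠ[𝓝 x] fun y => (f y ^ (1 / (γ - 1))) ^ γ := by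
    filter_upwards [hf.continuousAt.eventually (lt_mem_nhds hx)] with y hy
    rw [← Real.rpow_mul hy.le, hexp]
  have := (hf.rpow_const (p := γ / (γ - 1)) (Or.inl hx.ne')).congr_of_eventuallyEq hloc.symm
  rw [hexp'] at this
  exact this.congr_deriv (by ring)

lemma euler_momentum_of_enthalpy_balance {f : ℝ → ℝ} {f' x K γ S : ℝ} (hγ : γ ≠ 1)
    (hf : HasDerivAt f f' x) (hx : 0 < f x) (hS : S + K * γ / (γ - 1) * f' = 0) :
    f x ^ (1 / (γ - 1)) * S + deriv (fun y => K * (f y ^ (1 / (γ - 1))) ^ γ) x = 0 := by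
  rw [((hasDerivAt_rpow_one_div_sub_one_rpow hγ hf hx).const_mul K).deriv]
  linear_combination f x ^ (1 / (γ - 1)) * hS

theorem momentum_balance_of_emden_general
    (γ K ξ : ℝ) (hγ : 1 < γ) (hK : 0 < K)
    (D : Set ℝ)
    (a a' a'' b b' W : ℝ → ℝ)
    (ha : ∀ t ∈ D, HasDerivAt a (a' t) t)
    (ha' : ∀ t ∈ D, HasDerivAt a' (a'' t) t)
    (hb : ∀ t ∈ D, HasDerivAt b (b' t) t)
    (hapos : ∀ t ∈ D, 0 < a t)
    (hEmden : ∀ t ∈ D, a'' t = ξ / a t ^ γ)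
    (R u ρ : ℝ → ℝ → ℝ)
    (hR : R = fun x t => W t - ((γ - 1) / (K * γ)) * (b' t + b t * (a' t / a t)) * x
        - ((γ - 1) * ξ / (2 * K * γ * a t ^ (γ + 1))) * x ^ 2)
    (hu : u = fun x t => (a' t / a t) * x + b t)
    (hρ : ρ = fun x t => R x t ^ ((1 : ℝ) / (γ - 1))) :
    (∀ x : ℝ, ∀ t ∈ D,
      deriv (fun τ => u x τ) t + u x t * deriv (fun y => u y t) x
        + (K * γ / (γ - 1)) * deriv (fun y => R y t) x = 0) ∧
    (∀ x : ℝ, ∀ t ∈ D, 0 < R x t →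
      ρ x t * (deriv (fun τ => u x τ) t + u x t * deriv (fun y => u y t) x)
        + deriv (fun y => K * ρ y t ^ γ) x = 0) := by
  have balance : ∀ x : ℝ, ∀ t ∈ D,
      deriv (fun τ => u x τ) t + u x t * deriv (fun y => u y t) x
        + (K * γ / (γ - 1)) * deriv (fun y => R y t) x = 0 := by
    intro x t ht
    subst hR hu
    exact emden_momentum_balance x (zero_lt_one.trans hγ).ne' hγ.ne' hK.ne' (ha t ht)
      (hEmden t ht ▸ ha' t ht) (hb t ht) (hapos t ht)
  refine ⟨balance, fun x t ht hpos => ?_⟩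
  obtain ⟨R', hR_x⟩ : ∃ R', HasDerivAt (fun y => R y t) R' x :=
    ⟨_, by subst hR; exact hasDerivAt_const_sub_mul_sub_mul_sq _ _ _ x⟩
  subst hρ
  refine euler_momentum_of_enthalpy_balance hγ.ne' hR_x hpos ?_
  rw [← hR_x.deriv]
  exact balance x t ht

/-- With `a` solving the Emden equation and `u(x,t) = (a'(t)/a(t))x + b(t)`,
the quadratic profile `R` (playing the role of `ρ^{γ-1}`) satisfies the momentum
balance `u_t + u u_x + (Kγ/(γ-1)) ∂_x R = 0` everywhere; in particular, wherever
`R > 0` and `ρ = R^{1/(γ-1)}`, the momentum equation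
`ρ(u_t + u u_x) + ∂_x(Kρ^γ) = 0` of the compressible Euler equations holds. -/
theorem momentum_balance_of_emden
    (γ K ξ : ℝ) (hγ : 1 < γ) (hK : 0 < K)
    (T : ℝ≥0∞) (hT : 0 < T)
    (D : Set ℝ) (hD : D = {t : ℝ | 0 ≤ t ∧ ENNReal.ofReal t < T})
    (a a' a'' b b' W : ℝ → ℝ)
    (ha : ∀ t ∈ D, HasDerivAt a (a' t) t)
    (ha' : ∀ t ∈ D, HasDerivAt a' (a'' t) t)
    (ha''c : ContinuousOn a'' D)
    (hb : ∀ t ∈ D, HasDerivAt b (b' t) t)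
    (hb'c : ContinuousOn b' D)
    (hapos : ∀ t ∈ D, 0 < a t)
    (hEmden : ∀ t ∈ D, a'' t = ξ / a t ^ γ)
    (R u ρ : ℝ → ℝ → ℝ)
    (hR : R = fun x t => W t - ((γ - 1) / (K * γ)) * (b' t + b t * (a' t / a t)) * x
        - ((γ - 1) * ξ / (2 * K * γ * a t ^ (γ + 1))) * x ^ 2)
    (hu : u = fun x t => (a' t / a t) * x + b t)
    (hρ : ρ = fun x t => R x t ^ ((1 : ℝ) / (γ - 1))) :
    (∀ x : ℝ, ∀ t ∈ D,
      deriv (fun τ => u x τ) t + u x t * deriv (fun y => u y t) x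
        + (K * γ / (γ - 1)) * deriv (fun y => R y t) x = 0) ∧
    (∀ x : ℝ, ∀ t ∈ D, 0 < R x t →
      ρ x t * (deriv (fun τ => u x τ) t + u x t * deriv (fun y => u y t) x)
        + deriv (fun y => K * ρ y t ^ γ) x = 0) :=
  momentum_balance_of_emden_general γ K ξ hγ hK D a a' a'' b b' W ha ha' hb hapos hEmden R u ρ hR hu
    hρ
end

section
/- Let γ > 1, K > 0, T ∈ (0,∞], and let c, b : [0,T) → ℝ be differentiable functions. Suppose ρ : ℝ × [0,T) → (0,∞) is such that for each t the function x ↦ ρ(x,t)^{γ−1} is differentiable, and the pair (ρ, u) with u(x,t) = c(t) x + b(t) satisfies the momentum equation u_t + u u_x + (Kγ/(γ−1)) ∂_x(ρ^{γ−1}) = 0 at every (x,t) ∈ ℝ × [0,T). Then for all x ∈ ℝ and t ∈ [0,T): ρ^{γ−1}(x,t) = ρ^{γ−1}(0,t) − ((γ−1)/(Kγ))[b'(t) + b(t)c(t)] x − ((γ−1)/(2Kγ))[c'(t) + c(t)²] x². -/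
open Real Set Filter Topology
open scoped ENNReal

/-!
With `u = c(t) x + b(t)` the momentum equation reads, at each fixed time,
`(Kγ/(γ-1)) ∂ₓ(ρ^{γ-1}) = -((c' + c²) x + (b' + b c))`: the spatial slope of the enthalpy
`ρ^{γ-1}` is affine in `x`, so `ρ^{γ-1}` is the quadratic obtained by integrating from `0`.
-/

theorem eq_quadratic_of_hasDerivAt_affine {𝕜 : Type*} [RCLike 𝕜] {f : 𝕜 → 𝕜} {a b : 𝕜}
    (hf : ∀ y, HasDerivAt f (a * y + b) y) (x : 𝕜) :
    f x = f 0 + b * x + a / 2 * x ^ 2 := by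
  set g : 𝕜 → 𝕜 := fun y => f y - (b * y + a / 2 * y ^ 2)
  have hg : ∀ y, HasDerivAt g 0 y := by
    intro y
    refine ((hf y).fun_sub (((hasDerivAt_id' y).const_mul b).fun_add
      ((hasDerivAt_pow 2 y).const_mul (a / 2)))).congr_deriv ?_
    norm_num
    ring
  have hconst : g x = g 0 :=
    is_const_of_deriv_eq_zero (fun y => (hg y).differentiableAt) (fun y => (hg y).deriv) x 0
  simp only [g] at hconst
  linear_combination hconst

theorem density_profile_of_momentum_general
    (γ K : ℝ) (hγ : 1 < γ) (hK : 0 < K)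
    (D : Set ℝ)
    (c c' b b' : ℝ → ℝ)
    (hc : ∀ t ∈ D, HasDerivAt c (c' t) t)
    (hb : ∀ t ∈ D, HasDerivAt b (b' t) t)
    (ρ : ℝ → ℝ → ℝ)
    (hρdiff : ∀ t ∈ D, ∀ x : ℝ, DifferentiableAt ℝ (fun y => ρ y t ^ (γ - 1)) x)
    (u : ℝ → ℝ → ℝ)
    (hu : u = fun x t => c t * x + b t)
    (hmom : ∀ x : ℝ, ∀ t ∈ D,
      deriv (fun τ => u x τ) t + u x t * deriv (fun y => u y t) x
        + (K * γ / (γ - 1)) * deriv (fun y => ρ y t ^ (γ - 1)) x = 0) :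
    ∀ x : ℝ, ∀ t ∈ D,
      ρ x t ^ (γ - 1) = ρ 0 t ^ (γ - 1)
        - ((γ - 1) / (K * γ)) * (b' t + b t * c t) * x
        - ((γ - 1) / (2 * K * γ)) * (c' t + c t ^ 2) * x ^ 2 := by
  intro x t ht
  subst hu
  have hγ₁ : γ - 1 ≠ 0 := sub_ne_zero.mpr hγ.ne'
  have hKγ : K * γ ≠ 0 := by positivity
  have hslope : ∀ y, HasDerivAt (fun y => ρ y t ^ (γ - 1))
      (-((γ - 1) / (K * γ) * (c' t + c t ^ 2)) * y
        + -((γ - 1) / (K * γ) * (b' t + b t * c t))) y := by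
    intro y
    have hm := hmom y t ht
    beta_reduce at hm
    rw [((hc t ht).mul_const y).fun_add (hb t ht) |>.deriv,
      ((hasDerivAt_id' y).const_mul (c t)).add_const (b t) |>.deriv] at hm
    refine (hρdiff t ht y).hasDerivAt.congr_deriv ?_
    field_simp at hm ⊢
    linear_combination hm
  rw [eq_quadratic_of_hasDerivAt_affine hslope x]
  ring

/-- If a positive density `ρ` together with the linear velocity
`u(x,t) = c(t)x + b(t)` satisfies the momentum equation
`u_t + u u_x + (Kγ/(γ-1)) ∂_x(ρ^{γ-1}) = 0`, then `ρ^{γ-1}` is the explicit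
quadratic profile in `x` obtained by integrating from `0` to `x`. -/
theorem density_profile_of_momentum
    (γ K : ℝ) (hγ : 1 < γ) (hK : 0 < K)
    (T : ℝ≥0∞) (hT : 0 < T)
    (D : Set ℝ) (hD : D = {t : ℝ | 0 ≤ t ∧ ENNReal.ofReal t < T})
    (c c' b b' : ℝ → ℝ)
    (hc : ∀ t ∈ D, HasDerivAt c (c' t) t)
    (hb : ∀ t ∈ D, HasDerivAt b (b' t) t)
    (ρ : ℝ → ℝ → ℝ)
    (hρpos : ∀ x : ℝ, ∀ t ∈ D, 0 < ρ x t)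
    (hρdiff : ∀ t ∈ D, ∀ x : ℝ, DifferentiableAt ℝ (fun y => ρ y t ^ (γ - 1)) x)
    (u : ℝ → ℝ → ℝ)
    (hu : u = fun x t => c t * x + b t)
    (hmom : ∀ x : ℝ, ∀ t ∈ D,
      deriv (fun τ => u x τ) t + u x t * deriv (fun y => u y t) x
        + (K * γ / (γ - 1)) * deriv (fun y => ρ y t ^ (γ - 1)) x = 0) :
    ∀ x : ℝ, ∀ t ∈ D,
      ρ x t ^ (γ - 1) = ρ 0 t ^ (γ - 1)
        - ((γ - 1) / (K * γ)) * (b' t + b t * c t) * x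
        - ((γ - 1) / (2 * K * γ)) * (c' t + c t ^ 2) * x ^ 2 :=
  density_profile_of_momentum_general γ K hγ hK D c c' b b' hc hb ρ hρdiff u hu hmom
end

section
/- Let γ > 1, K > 0, T ∈ (0,∞], and let c, b : [0,T) → ℝ be twice continuously differentiable and W : [0,T) → ℝ continuously differentiable. Define R(x,t) = W(t) − ((γ−1)/(Kγ))[b'(t) + b(t)c(t)] x − ((γ−1)/(2Kγ))[c'(t) + c(t)²] x². Then the transported mass balance ∂_t R(x,t) + (c(t)x + b(t)) ∂_x R(x,t) + (γ−1) c(t) R(x,t) = 0 holds for all x ∈ ℝ and all t ∈ [0,T) if and only if the following three functional differential equations hold for all t ∈ [0,T): (1) W'(t) + (γ−1)c(t)W(t) − ((γ−1)/(Kγ)) b(t)[b'(t) + b(t)c(t)] = 0; (2) (d/dt)[b'(t) + b(t)c(t)] + γ c(t)[b'(t) + b(t)c(t)] + b(t)[c'(t) + c(t)²] = 0; (3) (d/dt)[c'(t) + c(t)²] + (γ+1)[c'(t) + c(t)²] c(t) = 0. -/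
open Real Set Filter Topology
open scoped ENNReal

/-!
Transporting a profile `p + q x + r x²` along the linear velocity `u x + v` and adding the
damping `k u R` keeps it quadratic in `x`, so the mass balance holds for every `x` exactly when
the three coefficients vanish. For the profile `R`, with `A = (γ - 1) / (K γ)`, these
coefficients are the left-hand sides of the three equations multiplied by `1`, `-A` and
`-A / 2`, and `A ≠ 0`.
-/

lemma forall_quadratic_eq_zero_iff {p q r : ℝ} :
    (∀ x : ℝ, p + q * x + r * x ^ 2 = 0) ↔ p = 0 ∧ q = 0 ∧ r = 0 := by
  refine ⟨fun h => ?_, fun ⟨hp, hq, hr⟩ x => by simp [hp, hq, hr]⟩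
  have h0 := h 0
  have h1 := h 1
  have hm := h (-1)
  norm_num at h0 h1 hm
  exact ⟨h0, by linarith, by linarith⟩

section QuadraticProfile

variable {R : ℝ → ℝ → ℝ} {p q r : ℝ → ℝ} {t p' q' r' : ℝ}

lemma transport_quadratic_profile (hR : ∀ x τ, R x τ = p τ + q τ * x + r τ * x ^ 2)
    (hp : HasDerivAt p p' t) (hq : HasDerivAt q q' t) (hr : HasDerivAt r r' t)
    (k u v x : ℝ) :
    deriv (fun τ => R x τ) t + (u * x + v) * deriv (fun y => R y t) x + k * u * R x t
      = (p' + v * q t + k * u * p t) + (q' + (k + 1) * u * q t + 2 * v * r t) * x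
        + (r' + (k + 2) * u * r t) * x ^ 2 := by
  have hτ : HasDerivAt (fun τ => R x τ) (p' + q' * x + r' * x ^ 2) t := by
    simp only [hR]
    exact (hp.add (hq.mul_const x)).add (hr.mul_const _)
  have hy : HasDerivAt (fun y => R y t) (q t + 2 * r t * x) x := by
    simp only [hR]
    exact ((((hasDerivAt_id' x).const_mul (q t)).const_add (p t)).add
      ((hasDerivAt_pow 2 x).const_mul (r t))).congr_deriv (by ring)
  rw [hτ.deriv, hy.deriv, hR]
  ring

lemma forall_transport_quadratic_profile_eq_zero_iff
    (hR : ∀ x τ, R x τ = p τ + q τ * x + r τ * x ^ 2)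
    (hp : HasDerivAt p p' t) (hq : HasDerivAt q q' t) (hr : HasDerivAt r r' t) (k u v : ℝ) :
    (∀ x, deriv (fun τ => R x τ) t + (u * x + v) * deriv (fun y => R y t) x
        + k * u * R x t = 0)
      ↔ p' + v * q t + k * u * p t = 0 ∧ q' + (k + 1) * u * q t + 2 * v * r t = 0
        ∧ r' + (k + 2) * u * r t = 0 := by
  simp only [transport_quadratic_profile hR hp hq hr]
  exact forall_quadratic_eq_zero_iff

end QuadraticProfile

theorem mass_balance_iff_functional_ODEs_general
    (γ K : ℝ) (hγ : 1 < γ) (hK : 0 < K)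
    (D : Set ℝ)
    (c c' c'' b b' b'' W W' : ℝ → ℝ)
    (hc : ∀ t ∈ D, HasDerivAt c (c' t) t)
    (hc' : ∀ t ∈ D, HasDerivAt c' (c'' t) t)
    (hb : ∀ t ∈ D, HasDerivAt b (b' t) t)
    (hb' : ∀ t ∈ D, HasDerivAt b' (b'' t) t)
    (hW : ∀ t ∈ D, HasDerivAt W (W' t) t)
    (R : ℝ → ℝ → ℝ)
    (hR : R = fun x t => W t - ((γ - 1) / (K * γ)) * (b' t + b t * c t) * x
        - ((γ - 1) / (2 * K * γ)) * (c' t + c t ^ 2) * x ^ 2) :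
    (∀ x : ℝ, ∀ t ∈ D,
        deriv (fun τ => R x τ) t + (c t * x + b t) * deriv (fun y => R y t) x
          + (γ - 1) * c t * R x t = 0)
    ↔ ((∀ t ∈ D, W' t + (γ - 1) * c t * W t
          - ((γ - 1) / (K * γ)) * b t * (b' t + b t * c t) = 0) ∧
       (∀ t ∈ D, deriv (fun τ => b' τ + b τ * c τ) t
          + γ * c t * (b' t + b t * c t) + b t * (c' t + c t ^ 2) = 0) ∧
       (∀ t ∈ D, deriv (fun τ => c' τ + c τ ^ 2) t
          + (γ + 1) * (c' t + c t ^ 2) * c t = 0)) := by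
  set A := (γ - 1) / (K * γ)
  have hA : -A ≠ 0 := neg_ne_zero.2 (div_ne_zero (by linarith) (by positivity))
  have hR' : ∀ x τ, R x τ = W τ + -A * (b' τ + b τ * c τ) * x
      + -A / 2 * (c' τ + c τ ^ 2) * x ^ 2 := by
    intro x τ
    rw [hR]
    ring
  have hB : ∀ t ∈ D, DifferentiableAt ℝ (fun τ => b' τ + b τ * c τ) t := fun t ht =>
    (hb' t ht).differentiableAt.add ((hb t ht).differentiableAt.mul (hc t ht).differentiableAt)
  have hE : ∀ t ∈ D, DifferentiableAt ℝ (fun τ => c' τ + c τ ^ 2) t := fun t ht =>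
    (hc' t ht).differentiableAt.add ((hc t ht).differentiableAt.pow 2)
  have key : ∀ t ∈ D,
      (∀ x, deriv (fun τ => R x τ) t + (c t * x + b t) * deriv (fun y => R y t) x
          + (γ - 1) * c t * R x t = 0)
        ↔ (W' t + (γ - 1) * c t * W t - A * b t * (b' t + b t * c t) = 0) ∧
          (deriv (fun τ => b' τ + b τ * c τ) t
            + γ * c t * (b' t + b t * c t) + b t * (c' t + c t ^ 2) = 0) ∧
          (deriv (fun τ => c' τ + c τ ^ 2) t + (γ + 1) * (c' t + c t ^ 2) * c t = 0) := by
    intro t ht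
    rw [forall_transport_quadratic_profile_eq_zero_iff hR' (hW t ht)
      ((hB t ht).hasDerivAt.const_mul (-A)) ((hE t ht).hasDerivAt.const_mul (-A / 2))]
    refine and_congr ?_ (and_congr ?_ ?_)
    · constructor <;> intro h <;> linear_combination h
    · convert mul_eq_zero_iff_left hA using 2; ring
    · convert mul_eq_zero_iff_left (div_ne_zero hA two_ne_zero) using 2; ring
  refine ⟨fun h => ?_, fun h x t ht => (key t ht).2 ⟨h.1 t ht, h.2.1 t ht, h.2.2 t ht⟩ x⟩
  have h' := fun t ht => (key t ht).1 fun x => h x t ht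
  exact ⟨fun t ht => (h' t ht).1, fun t ht => (h' t ht).2.1, fun t ht => (h' t ht).2.2⟩

/-- The transported mass balance for the quadratic profile `R` (playing the role
of `ρ^{γ-1}`, with `W` the role of `ρ^{γ-1}(0,·)`) holds for all `x` and `t` if
and only if the three functional differential equations for
`(c(t), b(t), W(t))` hold, obtained by comparing coefficients of `x⁰, x¹, x²`. -/
theorem mass_balance_iff_functional_ODEs
    (γ K : ℝ) (hγ : 1 < γ) (hK : 0 < K)
    (T : ℝ≥0∞) (hT : 0 < T)
    (D : Set ℝ) (hD : D = {t : ℝ | 0 ≤ t ∧ ENNReal.ofReal t < T})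
    (c c' c'' b b' b'' W W' : ℝ → ℝ)
    (hc : ∀ t ∈ D, HasDerivAt c (c' t) t)
    (hc' : ∀ t ∈ D, HasDerivAt c' (c'' t) t)
    (hc''c : ContinuousOn c'' D)
    (hb : ∀ t ∈ D, HasDerivAt b (b' t) t)
    (hb' : ∀ t ∈ D, HasDerivAt b' (b'' t) t)
    (hb''c : ContinuousOn b'' D)
    (hW : ∀ t ∈ D, HasDerivAt W (W' t) t)
    (hW'c : ContinuousOn W' D)
    (R : ℝ → ℝ → ℝ)
    (hR : R = fun x t => W t - ((γ - 1) / (K * γ)) * (b' t + b t * c t) * x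
        - ((γ - 1) / (2 * K * γ)) * (c' t + c t ^ 2) * x ^ 2) :
    (∀ x : ℝ, ∀ t ∈ D,
        deriv (fun τ => R x τ) t + (c t * x + b t) * deriv (fun y => R y t) x
          + (γ - 1) * c t * R x t = 0)
    ↔ ((∀ t ∈ D, W' t + (γ - 1) * c t * W t
          - ((γ - 1) / (K * γ)) * b t * (b' t + b t * c t) = 0) ∧
       (∀ t ∈ D, deriv (fun τ => b' τ + b τ * c τ) t
          + γ * c t * (b' t + b t * c t) + b t * (c' t + c t ^ 2) = 0) ∧
       (∀ t ∈ D, deriv (fun τ => c' τ + c τ ^ 2) t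
          + (γ + 1) * (c' t + c t ^ 2) * c t = 0)) :=
  mass_balance_iff_functional_ODEs_general γ K hγ hK D c c' c'' b b' b'' W W' hc hc' hb hb' hW R hR
end

section
/- Let γ > 1, K > 0, ξ ∈ ℝ, T ∈ (0,∞], and let a : [0,T) → ℝ be twice continuously differentiable with a(t) > 0 for all t, b : [0,T) → ℝ twice continuously differentiable, and W : [0,T) → ℝ continuously differentiable, satisfying for all t ∈ [0,T): (i) a''(t) = ξ / a(t)^γ; (ii) b''(t) + (1+γ)(a'(t)/a(t)) b'(t) + [2ξ/a(t)^{γ+1} + (γ−1) a'(t)²/a(t)²] b(t) = 0; (iii) W'(t) + (γ−1) W(t) a'(t)/a(t) − ((γ−1)/(Kγ)) [b'(t) + b(t) a'(t)/a(t)] b(t) = 0. Define R(r,t) = W(t) − ((γ−1)/(Kγ))[b'(t) + b(t)a'(t)/a(t)] r − ((γ−1)ξ/(2Kγ a(t)^{γ+1})) r², V(r,t) = (a'(t)/a(t)) r + b(t), and ρ(r,t) = R(r,t)^{1/(γ−1)}. Then at every (r,t) with r > 0 and R(r,t) > 0, the pair (ρ, V) satisfies the 1-dimensional radially symmetric compressible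 Euler system: ρ_t + V ρ_r + ρ V_r = 0 and ρ(V_t + V V_r) + ∂_r(K ρ^γ) = 0. -/
/-!
Writing `ρ = R^{1/(γ-1)}`, the radial Euler system becomes, wherever `R > 0`,
`R_t + V R_r + (γ-1) R V_r = 0` and `(γ-1)(V_t + V V_r) + Kγ R_r = 0`,
because `K ∂_r ρ^γ = Kγ/(γ-1) ρ R_r`. For `V` affine and `R` quadratic in `r` this system splits by
powers of `r`. With `g = a'/a` and `p = ξ/a^{γ+1} = a''/a` one has `g' = p - g²` and
`p' = -(γ+1) p g`, so the `r²` coefficients cancel identically, while the `r⁰` and `r¹`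
coefficients of the first equation are the ODEs for `W` and `b`; the second equation holds
identically.
-/

open Real
open scoped ENNReal

theorem euler_radial_of_enthalpy_system {γ K : ℝ} (hγ : γ ≠ 1) {R V ρ : ℝ → ℝ → ℝ}
    (hρ : ρ = fun s τ => R s τ ^ (1 / (γ - 1))) {r t Rr Rt Vr Vt : ℝ}
    (hRr : HasDerivAt (fun s => R s t) Rr r) (hRt : HasDerivAt (fun τ => R r τ) Rt t)
    (hVr : HasDerivAt (fun s => V s t) Vr r) (hVt : HasDerivAt (fun τ => V r τ) Vt t)
    (hpos : 0 < R r t)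
    (hmass : Rt + V r t * Rr + (γ - 1) * R r t * Vr = 0)
    (hmom : (γ - 1) * (Vt + V r t * Vr) + K * γ * Rr = 0) :
    deriv (fun τ => ρ r τ) t + V r t * deriv (fun s => ρ s t) r
      + ρ r t * deriv (fun s => V s t) r = 0 ∧
    ρ r t * (deriv (fun τ => V r τ) t + V r t * deriv (fun s => V s t) r)
      + deriv (fun s => K * ρ s t ^ γ) r = 0 := by
  subst hρ
  beta_reduce
  set m := 1 / (γ - 1)
  have hm : m * (γ - 1) = 1 := one_div_mul_cancel (sub_ne_zero.mpr hγ)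
  have hsplit : R r t ^ m = R r t ^ (m - 1) * R r t := by
    rw [rpow_sub_one hpos.ne', div_mul_cancel₀ _ hpos.ne']
  have hρr := hRr.rpow_const (p := m) (Or.inl hpos.ne')
  have hρt := hRt.rpow_const (p := m) (Or.inl hpos.ne')
  have hpr : HasDerivAt (fun s => K * (R s t ^ m) ^ γ) (K * γ * m * R r t ^ m * Rr) r := by
    have hρm := (rpow_pos_of_pos hpos m).ne'
    refine ((hρr.rpow_const (p := γ) (Or.inl hρm)).const_mul K).congr_deriv ?_
    rw [← rpow_mul hpos.le, hm, rpow_one, hsplit]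
    ring
  constructor
  · rw [hρt.deriv, hρr.deriv, hVr.deriv, hsplit]
    linear_combination m * R r t ^ (m - 1) * hmass - R r t ^ (m - 1) * R r t * Vr * hm
  · rw [hVt.deriv, hVr.deriv, hpr.deriv, hsplit]
    linear_combination m * R r t ^ (m - 1) * R r t * hmom
      - R r t ^ (m - 1) * R r t * (Vt + V r t * Vr) * hm

theorem HasDerivAt.div_of_hasDerivAt_deriv {f f' : ℝ → ℝ} {f'' t : ℝ}
    (hf : HasDerivAt f (f' t) t) (hf' : HasDerivAt f' f'' t) (h : f t ≠ 0) :
    HasDerivAt (fun τ => f' τ / f τ) (f'' / f t - (f' t / f t) ^ 2) t := by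
  refine (hf'.div hf h).congr_deriv ?_
  field_simp

theorem HasDerivAt.const_div_rpow {f : ℝ → ℝ} {f' t : ℝ} (c q : ℝ)
    (hf : HasDerivAt f f' t) (hpos : 0 < f t) :
    HasDerivAt (fun τ => c / f τ ^ q) (-q * (c / f t ^ q) * (f' / f t)) t := by
  have hq := (rpow_pos_of_pos hpos q).ne'
  have hfq := hf.rpow_const (p := q) (Or.inl hpos.ne')
  refine ((hasDerivAt_const t c).div hfq hq).congr_deriv ?_
  rw [rpow_sub_one hpos.ne']
  field_simp
  ring

theorem euler_radial_of_quadratic_ansatz {γ K κ : ℝ} (hγ : γ ≠ 1) (hκ : K * γ * κ = γ - 1)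
    {W b b' g p : ℝ → ℝ} {W' b'' t : ℝ}
    (hW : HasDerivAt W W' t) (hb : HasDerivAt b (b' t) t) (hb' : HasDerivAt b' b'' t)
    (hg : HasDerivAt g (p t - g t ^ 2) t) (hp : HasDerivAt p (-(γ + 1) * p t * g t) t)
    (hWODE : W' + (γ - 1) * W t * g t - κ * (b' t + b t * g t) * b t = 0)
    (hbODE : b'' + (1 + γ) * g t * b' t + (2 * p t + (γ - 1) * g t ^ 2) * b t = 0)
    {R V ρ : ℝ → ℝ → ℝ}
    (hR : R = fun s τ => W τ - κ * (b' τ + b τ * g τ) * s - κ / 2 * p τ * s ^ 2)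
    (hV : V = fun s τ => g τ * s + b τ) (hρ : ρ = fun s τ => R s τ ^ (1 / (γ - 1)))
    {r : ℝ} (hpos : 0 < R r t) :
    deriv (fun τ => ρ r τ) t + V r t * deriv (fun s => ρ s t) r
      + ρ r t * deriv (fun s => V s t) r = 0 ∧
    ρ r t * (deriv (fun τ => V r τ) t + V r t * deriv (fun s => V s t) r)
      + deriv (fun s => K * ρ s t ^ γ) r = 0 := by
  refine euler_radial_of_enthalpy_system hγ hρ
    (Rr := -κ * (b' t + b t * g t) - κ * p t * r)
    (Rt := W' - κ * (b'' + (b' t * g t + b t * (p t - g t ^ 2))) * r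
      - κ / 2 * (-(γ + 1) * p t * g t) * r ^ 2)
    (Vr := g t) (Vt := (p t - g t ^ 2) * r + b' t) ?_ ?_ ?_ ?_ hpos ?_ ?_
  · rw [hR]
    refine ((((hasDerivAt_id r).const_mul _).const_sub _).sub
      ((hasDerivAt_pow 2 r).const_mul _)).congr_deriv ?_
    ring
  · rw [hR]
    exact ((hW.sub (((hb'.add (hb.mul hg)).const_mul κ).mul_const r)).sub
      ((hp.const_mul (κ / 2)).mul_const (r ^ 2)))
  · rw [hV]
    simpa using ((hasDerivAt_id r).const_mul (g t)).add_const (b t)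
  · rw [hV]
    exact (hg.mul_const r).add hb
  · rw [hR, hV]
    linear_combination hWODE - κ * r * hbODE
  · rw [hV]
    linear_combination -(b' t + b t * g t + p t * r) * hκ

theorem perturbational_solutions_euler_radial_general
    (γ K ξ : ℝ) (hγ : 1 < γ) (hK : 0 < K)
    (D : Set ℝ)
    (a a' a'' b b' b'' W W' : ℝ → ℝ)
    (ha : ∀ t ∈ D, HasDerivAt a (a' t) t)
    (ha' : ∀ t ∈ D, HasDerivAt a' (a'' t) t)
    (hb : ∀ t ∈ D, HasDerivAt b (b' t) t)
    (hb' : ∀ t ∈ D, HasDerivAt b' (b'' t) t)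
    (hW : ∀ t ∈ D, HasDerivAt W (W' t) t)
    (hapos : ∀ t ∈ D, 0 < a t)
    (hEmden : ∀ t ∈ D, a'' t = ξ / a t ^ γ)
    (hbODE : ∀ t ∈ D, b'' t + (1 + γ) * (a' t / a t) * b' t
        + (2 * ξ / a t ^ (γ + 1) + (γ - 1) * (a' t) ^ 2 / (a t) ^ 2) * b t = 0)
    (hWODE : ∀ t ∈ D, W' t + (γ - 1) * W t * (a' t / a t)
        - ((γ - 1) / (K * γ)) * (b' t + b t * (a' t / a t)) * b t = 0)
    (R V ρ : ℝ → ℝ → ℝ)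
    (hR : R = fun r t => W t - ((γ - 1) / (K * γ)) * (b' t + b t * (a' t / a t)) * r
        - ((γ - 1) * ξ / (2 * K * γ * a t ^ (γ + 1))) * r ^ 2)
    (hV : V = fun r t => (a' t / a t) * r + b t)
    (hρ : ρ = fun r t => R r t ^ ((1 : ℝ) / (γ - 1)))
    (r t : ℝ) (ht : t ∈ D) (hRpos : 0 < R r t) :
    deriv (fun τ => ρ r τ) t + V r t * deriv (fun s => ρ s t) r
      + ρ r t * deriv (fun s => V s t) r = 0 ∧
    ρ r t * (deriv (fun τ => V r τ) t + V r t * deriv (fun s => V s t) r)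
      + deriv (fun s => K * ρ s t ^ γ) r = 0 := by
  have hat := hapos t ht
  set κ := (γ - 1) / (K * γ)
  set g := fun τ => a' τ / a τ
  set p := fun τ => ξ / a τ ^ (γ + 1)
  have hκ : K * γ * κ = γ - 1 := by
    simp only [κ]; field_simp [hK.ne', (zero_lt_one.trans hγ).ne']
  have hR' : R = fun s τ => W τ - κ * (b' τ + b τ * g τ) * s - κ / 2 * p τ * s ^ 2 := by
    rw [hR]; ext s τ; simp only [κ, g, p]; ring
  have hp : a'' t / a t = p t := by
    rw [hEmden t ht, div_div, ← rpow_add_one hat.ne']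
  have hg' : HasDerivAt g (p t - g t ^ 2) t := by
    rw [← hp]; exact (ha t ht).div_of_hasDerivAt_deriv (ha' t ht) hat.ne'
  have hp' : HasDerivAt p (-(γ + 1) * p t * g t) t := (ha t ht).const_div_rpow ξ (γ + 1) hat
  have hbODE' : b'' t + (1 + γ) * g t * b' t + (2 * p t + (γ - 1) * g t ^ 2) * b t = 0 := by
    simpa only [g, p, mul_div_assoc, div_pow] using hbODE t ht
  exact euler_radial_of_quadratic_ansatz hγ.ne' hκ (hW t ht) (hb t ht) (hb' t ht) hg' hp'
    (hWODE t ht) hbODE' hR' (by rw [hV]) hρ hRpos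

/-- The constructed perturbational solutions also solve the 1-dimensional
compressible Euler equations in radial symmetry: with `V(r,t) = (a'(t)/a(t)) r + b(t)`
and `ρ = R^{1/(γ-1)}`, at every `(r,t)` with `r > 0` and `R(r,t) > 0` we have
`ρ_t + V ρ_r + ρ V_r = 0` and `ρ(V_t + V V_r) + ∂_r(K ρ^γ) = 0`. -/
theorem perturbational_solutions_euler_radial
    (γ K ξ : ℝ) (hγ : 1 < γ) (hK : 0 < K)
    (T : ℝ≥0∞) (hT : 0 < T)
    (D : Set ℝ) (hD : D = {t : ℝ | 0 ≤ t ∧ ENNReal.ofReal t < T})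
    (a a' a'' b b' b'' W W' : ℝ → ℝ)
    (ha : ∀ t ∈ D, HasDerivAt a (a' t) t)
    (ha' : ∀ t ∈ D, HasDerivAt a' (a'' t) t)
    (ha''c : ContinuousOn a'' D)
    (hb : ∀ t ∈ D, HasDerivAt b (b' t) t)
    (hb' : ∀ t ∈ D, HasDerivAt b' (b'' t) t)
    (hb''c : ContinuousOn b'' D)
    (hW : ∀ t ∈ D, HasDerivAt W (W' t) t)
    (hW'c : ContinuousOn W' D)
    (hapos : ∀ t ∈ D, 0 < a t)
    (hEmden : ∀ t ∈ D, a'' t = ξ / a t ^ γ)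
    (hbODE : ∀ t ∈ D, b'' t + (1 + γ) * (a' t / a t) * b' t
        + (2 * ξ / a t ^ (γ + 1) + (γ - 1) * (a' t) ^ 2 / (a t) ^ 2) * b t = 0)
    (hWODE : ∀ t ∈ D, W' t + (γ - 1) * W t * (a' t / a t)
        - ((γ - 1) / (K * γ)) * (b' t + b t * (a' t / a t)) * b t = 0)
    (R V ρ : ℝ → ℝ → ℝ)
    (hR : R = fun r t => W t - ((γ - 1) / (K * γ)) * (b' t + b t * (a' t / a t)) * r
        - ((γ - 1) * ξ / (2 * K * γ * a t ^ (γ + 1))) * r ^ 2)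
    (hV : V = fun r t => (a' t / a t) * r + b t)
    (hρ : ρ = fun r t => R r t ^ ((1 : ℝ) / (γ - 1)))
    (r t : ℝ) (hr : 0 < r) (ht : t ∈ D) (hRpos : 0 < R r t) :
    deriv (fun τ => ρ r τ) t + V r t * deriv (fun s => ρ s t) r
      + ρ r t * deriv (fun s => V s t) r = 0 ∧
    ρ r t * (deriv (fun τ => V r τ) t + V r t * deriv (fun s => V s t) r)
      + deriv (fun s => K * ρ s t ^ γ) r = 0 :=
  perturbational_solutions_euler_radial_general γ K ξ hγ hK D a a' a'' b b' b'' W W' ha ha' hb hb'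
    hW hapos hEmden hbODE hWODE R V ρ hR hV hρ r t ht hRpos
end

section
/- Let γ > 1, K > 0, μ > 0, ξ ∈ ℝ, T ∈ (0,∞], and let a, b, W satisfy the hypotheses (i)–(iii) as in the main construction: a twice continuously differentiable, a > 0, a'' = ξ/a^γ; b'' + (1+γ)(a'/a)b' + [2ξ/a^{γ+1} + (γ−1)(a'/a)²]b = 0; W' + (γ−1)W a'/a − ((γ−1)/(Kγ))[b' + b a'/a]b = 0. Define R(x,t) = W(t) − ((γ−1)/(Kγ))[b'(t) + b(t)a'(t)/a(t)] x − ((γ−1)ξ/(2Kγ a(t)^{γ+1})) x², u(x,t) = (a'(t)/a(t)) x + b(t), and ρ(x,t) = R(x,t)^{1/(γ−1)}. Then at every (x,t) with R(x,t) > 0, the pair (ρ, u) also satisfies the 1-dimensional compressible Navier–Stokes equations: ∂_t ρ + ∂_x(ρu) = 0 and ∂_t(ρu) + ∂_x(ρu² + Kρ^γ) = μ ∂²u/∂x² (indeed ∂²u/∂x² = 0 since u is linear in x). -/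
/-!
For `R > 0` and `ρ = R ^ (1 / (γ - 1))`, the continuity equation is
`R ^ (1 / (γ - 1) - 1) / (γ - 1)` times the transport equation `R_t + u R_x + (γ - 1) u_x R = 0`,
and, granted continuity, the momentum equation of the Euler system is `ρ` times
`u_t + u u_x + K γ / (γ - 1) R_x = 0`, because `K (ρ ^ γ)_x = K γ / (γ - 1) ρ R_x`. For `R`
quadratic and `u` affine in `x`, both are polynomial identities in `x` whose coefficients are the
ODEs for `a`, `b`, `W`. The viscous term vanishes because `u` is affine in `x`.
-/

open Real

section EulerReduction

variable {γ K : ℝ} {R u : ℝ → ℝ → ℝ} {x t Rt Rx ut ux : ℝ}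

theorem continuity_of_transport (hγ : γ ≠ 1) (hpos : 0 < R x t)
    (hRt : HasDerivAt (R x ·) Rt t) (hRx : HasDerivAt (R · t) Rx x)
    (hux : HasDerivAt (u · t) ux x)
    (htransport : Rt + u x t * Rx + (γ - 1) * ux * R x t = 0) :
    deriv (fun τ => R x τ ^ ((1 : ℝ) / (γ - 1))) t
      + deriv (fun y => R y t ^ ((1 : ℝ) / (γ - 1)) * u y t) x = 0 := by
  set n : ℝ := 1 / (γ - 1)
  have hn : n * (γ - 1) = 1 := one_div_mul_cancel (sub_ne_zero.2 hγ)
  have hR : R x t ^ n = R x t ^ (n - 1) * R x t := by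
    rw [← rpow_add_one hpos.ne', sub_add_cancel]
  rw [(hRt.rpow_const (Or.inl hpos.ne')).deriv,
    ((hRx.rpow_const (Or.inl hpos.ne')).fun_mul hux).deriv, hR]
  linear_combination (n * R x t ^ (n - 1)) * htransport - R x t ^ (n - 1) * R x t * ux * hn

theorem momentum_of_transport (hγ : γ ≠ 1) (hpos : 0 < R x t)
    (hRt : HasDerivAt (R x ·) Rt t) (hRx : HasDerivAt (R · t) Rx x)
    (hut : HasDerivAt (u x ·) ut t) (hux : HasDerivAt (u · t) ux x)
    (htransport : Rt + u x t * Rx + (γ - 1) * ux * R x t = 0)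
    (hburgers : ut + u x t * ux + K * γ / (γ - 1) * Rx = 0) :
    deriv (fun τ => R x τ ^ ((1 : ℝ) / (γ - 1)) * u x τ) t
      + deriv (fun y => R y t ^ ((1 : ℝ) / (γ - 1)) * u y t ^ 2
          + K * (R y t ^ ((1 : ℝ) / (γ - 1))) ^ γ) x = 0 := by
  set n : ℝ := 1 / (γ - 1)
  have hn : n * (γ - 1) = 1 := one_div_mul_cancel (sub_ne_zero.2 hγ)
  have hR : R x t ^ n = R x t ^ (n - 1) * R x t := by
    rw [← rpow_add_one hpos.ne', sub_add_cancel]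
  have hργ : (R x t ^ n) ^ (γ - 1) = R x t := by
    rw [← rpow_mul hpos.le, hn, rpow_one]
  have hρx := hRx.rpow_const (p := n) (Or.inl hpos.ne')
  rw [((hRt.rpow_const (Or.inl hpos.ne')).fun_mul hut).deriv,
    ((hρx.fun_mul (hux.fun_pow 2)).fun_add
      ((hρx.rpow_const (Or.inl (rpow_pos_of_pos hpos n).ne')).const_mul K)).deriv, hργ, hR]
  linear_combination (u x t * n * R x t ^ (n - 1)) * htransport
    + R x t ^ (n - 1) * R x t * hburgers - u x t * R x t ^ (n - 1) * R x t * ux * hn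

end EulerReduction

section QuadraticAnsatz

variable {γ K : ℝ} {R u : ℝ → ℝ → ℝ} {W B E α b : ℝ → ℝ} {W' B' E' α' b' x t : ℝ}

theorem euler_of_quadratic_ansatz (hγ : γ ≠ 1)
    (hR : R = fun x t => W t - B t * x - E t * x ^ 2)
    (hu : u = fun x t => α t * x + b t)
    (hW : HasDerivAt W W' t) (hB : HasDerivAt B B' t) (hE : HasDerivAt E E' t)
    (hα : HasDerivAt α α' t) (hb : HasDerivAt b b' t) (hpos : 0 < R x t)
    (hW_ode : W' + (γ - 1) * W t * α t - B t * b t = 0)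
    (hB_ode : B' + γ * α t * B t + 2 * b t * E t = 0)
    (hE_ode : E' = -(γ + 1) * α t * E t)
    (hα_ode : α' + α t ^ 2 = 2 * (K * γ / (γ - 1)) * E t)
    (hb_ode : b' + α t * b t = K * γ / (γ - 1) * B t) :
    deriv (fun τ => R x τ ^ ((1 : ℝ) / (γ - 1))) t
        + deriv (fun y => R y t ^ ((1 : ℝ) / (γ - 1)) * u y t) x = 0 ∧
      deriv (fun τ => R x τ ^ ((1 : ℝ) / (γ - 1)) * u x τ) t
        + deriv (fun y => R y t ^ ((1 : ℝ) / (γ - 1)) * u y t ^ 2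
          + K * (R y t ^ ((1 : ℝ) / (γ - 1))) ^ γ) x = 0 := by
  have hRt : HasDerivAt (R x ·) (W' - B' * x - E' * x ^ 2) t := by
    subst hR
    exact (hW.fun_sub (hB.mul_const x)).fun_sub (hE.mul_const (x ^ 2))
  have hRx : HasDerivAt (R · t) (-B t - 2 * E t * x) x := by
    subst hR
    exact ((((hasDerivAt_id' x).const_mul (B t)).const_sub (W t)).fun_sub
      ((hasDerivAt_pow 2 x).const_mul (E t))).congr_deriv (by ring)
  have hut : HasDerivAt (u x ·) (α' * x + b') t := by
    subst hu
    exact (hα.mul_const x).fun_add hb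
  have hux : HasDerivAt (u · t) (α t) x := by
    subst hu
    exact (((hasDerivAt_id' x).const_mul (α t)).add_const (b t)).congr_deriv (mul_one _)
  have htransport : (W' - B' * x - E' * x ^ 2) + u x t * (-B t - 2 * E t * x)
      + (γ - 1) * α t * R x t = 0 := by
    subst hR hu
    linear_combination hW_ode - x * hB_ode - x ^ 2 * hE_ode
  have hburgers : (α' * x + b') + u x t * α t + K * γ / (γ - 1) * (-B t - 2 * E t * x) = 0 := by
    subst hu
    linear_combination x * hα_ode + hb_ode
  exact ⟨continuity_of_transport hγ hpos hRt hRx hux htransport,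
    momentum_of_transport hγ hpos hRt hRx hut hux htransport hburgers⟩

end QuadraticAnsatz

section Coefficients

variable {a a' : ℝ → ℝ} {a'' ξ γ C D p t : ℝ}

theorem hasDerivAt_div_of_emden (ha : HasDerivAt a (a' t) t) (ha' : HasDerivAt a' a'' t)
    (hpos : 0 < a t) (hemden : a'' = ξ / a t ^ γ) :
    HasDerivAt (fun τ => a' τ / a τ) (ξ / a t ^ (γ + 1) - (a' t / a t) ^ 2) t :=
  (ha'.fun_div ha hpos.ne').congr_deriv <| by
    rw [hemden, rpow_add_one hpos.ne']
    field_simp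

theorem HasDerivAt.const_div_mul_rpow (ha : HasDerivAt a (a' t) t) (hpos : 0 < a t)
    (hD : D ≠ 0) :
    HasDerivAt (fun τ => C / (D * a τ ^ p)) (-p * (a' t / a t) * (C / (D * a t ^ p))) t :=
  ((hasDerivAt_const t C).fun_div ((ha.rpow_const (Or.inl hpos.ne')).const_mul D)
      (mul_ne_zero hD (rpow_pos_of_pos hpos p).ne')).congr_deriv <| by
    rw [rpow_sub_one hpos.ne']
    field_simp
    ring

end Coefficients

open scoped ENNReal

theorem perturbational_solutions_navier_stokes_general
    (γ K μ ξ : ℝ) (hγ : 1 < γ) (hK : 0 < K)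
    (D : Set ℝ)
    (a a' a'' b b' b'' W W' : ℝ → ℝ)
    (ha : ∀ t ∈ D, HasDerivAt a (a' t) t)
    (ha' : ∀ t ∈ D, HasDerivAt a' (a'' t) t)
    (hb : ∀ t ∈ D, HasDerivAt b (b' t) t)
    (hb' : ∀ t ∈ D, HasDerivAt b' (b'' t) t)
    (hW : ∀ t ∈ D, HasDerivAt W (W' t) t)
    (hapos : ∀ t ∈ D, 0 < a t)
    (hEmden : ∀ t ∈ D, a'' t = ξ / a t ^ γ)
    (hbODE : ∀ t ∈ D, b'' t + (1 + γ) * (a' t / a t) * b' t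
        + (2 * ξ / a t ^ (γ + 1) + (γ - 1) * (a' t) ^ 2 / (a t) ^ 2) * b t = 0)
    (hWODE : ∀ t ∈ D, W' t + (γ - 1) * W t * (a' t / a t)
        - ((γ - 1) / (K * γ)) * (b' t + b t * (a' t / a t)) * b t = 0)
    (R u ρ : ℝ → ℝ → ℝ)
    (hR : R = fun x t => W t - ((γ - 1) / (K * γ)) * (b' t + b t * (a' t / a t)) * x
        - ((γ - 1) * ξ / (2 * K * γ * a t ^ (γ + 1))) * x ^ 2)
    (hu : u = fun x t => (a' t / a t) * x + b t)
    (hρ : ρ = fun x t => R x t ^ ((1 : ℝ) / (γ - 1)))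
    (x t : ℝ) (ht : t ∈ D) (hRpos : 0 < R x t) :
    deriv (fun τ => ρ x τ) t + deriv (fun y => ρ y t * u y t) x = 0 ∧
    deriv (fun τ => ρ x τ * u x τ) t
      + deriv (fun y => ρ y t * u y t ^ 2 + K * ρ y t ^ γ) x
      = μ * deriv (fun y => deriv (fun z => u z t) y) x ∧
    deriv (fun y => deriv (fun z => u z t) y) x = 0 := by
  have hA := hapos t ht
  have hkc : K * γ / (γ - 1) * ((γ - 1) / (K * γ)) = 1 := by
    field_simp [hK.ne', (zero_lt_one.trans hγ).ne', sub_ne_zero.2 hγ.ne']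
  have hα := hasDerivAt_div_of_emden (ha t ht) (ha' t ht) hA (hEmden t ht)
  obtain ⟨hcont, hmom⟩ := euler_of_quadratic_ansatz (K := K) hγ.ne' hR hu (hW t ht)
    (((hb' t ht).fun_add ((hb t ht).fun_mul hα)).const_mul ((γ - 1) / (K * γ)))
    ((ha t ht).const_div_mul_rpow hA (by positivity)) hα (hb t ht) hRpos (hWODE t ht)
    (by linear_combination (γ - 1) / (K * γ) * hbODE t ht) rfl
    (by linear_combination (-(ξ / a t ^ (γ + 1))) * hkc)
    (by linear_combination (-(b' t + b t * (a' t / a t))) * hkc)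
  have huxx : deriv (fun y => deriv (fun z => u z t) y) x = 0 := by
    subst hu
    simp
  subst hρ
  exact ⟨hcont, by rw [huxx, mul_zero]; exact hmom, huxx⟩

/-- The constructed perturbational solutions of the compressible Euler equations
also solve the 1-dimensional compressible Navier–Stokes equations
`ρ_t + (ρu)_x = 0`, `(ρu)_t + (ρu² + Kρ^γ)_x = μ u_{xx}`, since the velocity is
linear in `x` and hence `u_{xx} = 0`. -/
theorem perturbational_solutions_navier_stokes
    (γ K μ ξ : ℝ) (hγ : 1 < γ) (hK : 0 < K) (hμ : 0 < μ)
    (T : ℝ≥0∞) (hT : 0 < T)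
    (D : Set ℝ) (hD : D = {t : ℝ | 0 ≤ t ∧ ENNReal.ofReal t < T})
    (a a' a'' b b' b'' W W' : ℝ → ℝ)
    (ha : ∀ t ∈ D, HasDerivAt a (a' t) t)
    (ha' : ∀ t ∈ D, HasDerivAt a' (a'' t) t)
    (ha''c : ContinuousOn a'' D)
    (hb : ∀ t ∈ D, HasDerivAt b (b' t) t)
    (hb' : ∀ t ∈ D, HasDerivAt b' (b'' t) t)
    (hb''c : ContinuousOn b'' D)
    (hW : ∀ t ∈ D, HasDerivAt W (W' t) t)
    (hW'c : ContinuousOn W' D)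
    (hapos : ∀ t ∈ D, 0 < a t)
    (hEmden : ∀ t ∈ D, a'' t = ξ / a t ^ γ)
    (hbODE : ∀ t ∈ D, b'' t + (1 + γ) * (a' t / a t) * b' t
        + (2 * ξ / a t ^ (γ + 1) + (γ - 1) * (a' t) ^ 2 / (a t) ^ 2) * b t = 0)
    (hWODE : ∀ t ∈ D, W' t + (γ - 1) * W t * (a' t / a t)
        - ((γ - 1) / (K * γ)) * (b' t + b t * (a' t / a t)) * b t = 0)
    (R u ρ : ℝ → ℝ → ℝ)
    (hR : R = fun x t => W t - ((γ - 1) / (K * γ)) * (b' t + b t * (a' t / a t)) * x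
        - ((γ - 1) * ξ / (2 * K * γ * a t ^ (γ + 1))) * x ^ 2)
    (hu : u = fun x t => (a' t / a t) * x + b t)
    (hρ : ρ = fun x t => R x t ^ ((1 : ℝ) / (γ - 1)))
    (x t : ℝ) (ht : t ∈ D) (hRpos : 0 < R x t) :
    deriv (fun τ => ρ x τ) t + deriv (fun y => ρ y t * u y t) x = 0 ∧
    deriv (fun τ => ρ x τ * u x τ) t
      + deriv (fun y => ρ y t * u y t ^ 2 + K * ρ y t ^ γ) x
      = μ * deriv (fun y => deriv (fun z => u z t) y) x ∧
    deriv (fun y => deriv (fun z => u z t) y) x = 0 :=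
  perturbational_solutions_navier_stokes_general γ K μ ξ hγ hK D a a' a'' b b' b'' W W' ha ha' hb
    hb' hW hapos hEmden hbODE hWODE R u ρ hR hu hρ x t ht hRpos
end

section
/- Let κ > 1, ξ < 0, a₀ > 0, and suppose a₁ < √(−2ξ/(κ−1)) · a₀^{(1−κ)/2}. Then there is no twice continuously differentiable function a : [0,∞) → ℝ with a(t) > 0 for all t ≥ 0, a''(t) = ξ / a(t)^κ for all t ≥ 0, a(0) = a₀, and a'(0) = a₁; that is, every positive solution of the Emden initial-value problem with these data breaks down (reaches zero) in finite time. -/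
open Real Set

/-!
A positive solution is concave (`a'' < 0`) and bounded below, so it is nondecreasing: `a' ≥ 0`.
In particular `a₁ ≥ 0`, and the hypothesis on `a₁` says exactly that the conserved energy
`a'² + 2ξ/(κ-1) · a^(1-κ)` is negative. Negative energy bounds `a` above by some `M`, whence
`a'' ≤ ξ / M^κ < 0` uniformly, and `a'` eventually becomes negative.
-/

theorem Convex.image_sub_le_mul_sub_of_hasDerivAt_le {D : Set ℝ} (hD : Convex ℝ D)
    {f f' : ℝ → ℝ} {C : ℝ} (hf : ∀ t ∈ D, HasDerivAt f (f' t) t) (hf' : ∀ t ∈ D, f' t ≤ C)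
    {x y : ℝ} (hx : x ∈ D) (hy : y ∈ D) (hxy : x ≤ y) : f y - f x ≤ C * (y - x) :=
  hD.image_sub_le_mul_sub_of_deriv_le (fun t ht => (hf t ht).continuousAt.continuousWithinAt)
    (fun t ht => (hf t (interior_subset ht)).differentiableAt.differentiableWithinAt)
    (fun t ht => (hf t (interior_subset ht)).deriv ▸ hf' t (interior_subset ht)) x hx y hy hxy

theorem Convex.antitoneOn_of_hasDerivAt_nonpos {D : Set ℝ} (hD : Convex ℝ D)
    {f f' : ℝ → ℝ} (hf : ∀ t ∈ D, HasDerivAt f (f' t) t) (hf' : ∀ t ∈ D, f' t ≤ 0) :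
    AntitoneOn f D := fun x hx y hy hxy => by
  linarith [hD.image_sub_le_mul_sub_of_hasDerivAt_le hf hf' hx hy hxy]

theorem hasDerivAt_nonneg_of_antitoneOn_of_bddBelow {f f' : ℝ → ℝ} {t₀ : ℝ}
    (hf : ∀ t ∈ Ici t₀, HasDerivAt f (f' t) t) (hf' : AntitoneOn f' (Ici t₀))
    (hbdd : BddBelow (f '' Ici t₀)) : ∀ t ∈ Ici t₀, 0 ≤ f' t := by
  intro t ht
  by_contra! hneg
  -- `f` lies below its tangent line at `t`, which has negative slope.
  obtain ⟨m, hm⟩ := hbdd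
  have hfD : ∀ s ∈ Ici t, HasDerivAt f (f' s) s := fun s hs => hf s (mem_Ici.2 (le_trans ht hs))
  have hslope : ∀ s ∈ Ici t, f' s ≤ f' t := fun s hs => hf' ht (mem_Ici.2 (le_trans ht hs)) hs
  have hfm : m ≤ f t := hm (mem_image_of_mem f ht)
  set d := (f t - m) / -f' t with hd
  have hd_nonneg : 0 ≤ d := div_nonneg (by linarith) (by linarith)
  have hdrop : f' t * d = m - f t := by
    rw [hd]
    field_simp [hneg.ne]
    ring
  have hts : t ≤ t + d + 1 := by linarith
  have htangent := (convex_Ici t).image_sub_le_mul_sub_of_hasDerivAt_le hfD hslope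
    self_mem_Ici hts hts
  have := hm (mem_image_of_mem f (mem_Ici.2 (le_trans ht hts)))
  linarith

noncomputable def emdenEnergy (κ ξ : ℝ) (a a' : ℝ → ℝ) (t : ℝ) : ℝ :=
  a' t ^ 2 + 2 * ξ / (κ - 1) * a t ^ (1 - κ)

theorem hasDerivAt_emdenEnergy {κ ξ t : ℝ} {a a' : ℝ → ℝ} (hκ : κ ≠ 1) (hpos : 0 < a t)
    (ha : HasDerivAt a (a' t) t) (ha' : HasDerivAt a' (ξ / a t ^ κ) t) :
    HasDerivAt (emdenEnergy κ ξ a a') 0 t := by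
  have hpow := (Real.hasDerivAt_rpow_const (p := 1 - κ) (Or.inl hpos.ne')).comp t ha
  refine ((ha'.fun_pow 2).add (hpow.const_mul (2 * ξ / (κ - 1)))).congr_deriv ?_
  have hκ' : κ - 1 ≠ 0 := sub_ne_zero.2 hκ
  rw [show 1 - κ - 1 = -κ by ring, Real.rpow_neg hpos.le]
  field_simp
  ring

theorem emdenEnergy_eq_of_hasDerivAt {κ ξ t₀ : ℝ} {a a' : ℝ → ℝ} (hκ : κ ≠ 1)
    (hpos : ∀ t ∈ Ici t₀, 0 < a t) (ha : ∀ t ∈ Ici t₀, HasDerivAt a (a' t) t)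
    (ha' : ∀ t ∈ Ici t₀, HasDerivAt a' (ξ / a t ^ κ) t) :
    ∀ t ∈ Ici t₀, emdenEnergy κ ξ a a' t = emdenEnergy κ ξ a a' t₀ := by
  have hE : ∀ t ∈ Ici t₀, HasDerivAt (emdenEnergy κ ξ a a') 0 t := fun t ht =>
    hasDerivAt_emdenEnergy hκ (hpos t ht) (ha t ht) (ha' t ht)
  intro t ht
  refine constant_of_has_deriv_right_zero (fun s hs => ?_) (fun s hs => ?_) t ⟨ht, le_rfl⟩
  · exact (hE s hs.1).continuousAt.continuousWithinAt
  · exact (hE s hs.1).hasDerivWithinAt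

theorem sq_lt_mul_rpow_of_lt_sqrt_mul_rpow {b c x p : ℝ} (hb : 0 ≤ b) (hc : 0 ≤ c) (hx : 0 < x)
    (h : b < √c * x ^ (p / 2)) : b ^ 2 < c * x ^ p := by
  calc b ^ 2 < (√c * x ^ (p / 2)) ^ 2 := pow_lt_pow_left₀ h hb two_ne_zero
    _ = c * x ^ p := by
      rw [mul_pow, sq_sqrt hc, ← Real.rpow_natCast, ← Real.rpow_mul hx.le]
      norm_num

theorem le_rpow_of_emdenEnergy_eq_of_neg {κ ξ E t : ℝ} {a a' : ℝ → ℝ} (hκ : 1 < κ) (hξ : ξ < 0)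
    (hpos : 0 < a t) (hE : emdenEnergy κ ξ a a' t = E) (hE0 : E < 0) :
    a t ≤ (E * (κ - 1) / (2 * ξ)) ^ (1 - κ)⁻¹ := by
  have hκ1 : 0 < κ - 1 := sub_pos.2 hκ
  have hξ2 : 2 * ξ < 0 := by linarith
  rw [Real.le_rpow_inv_iff_of_neg hpos (div_pos_of_neg_of_neg (mul_neg_of_neg_of_pos hE0 hκ1) hξ2)
    (by linarith), div_le_iff_of_neg hξ2]
  have hE' : E * (κ - 1) = a' t ^ 2 * (κ - 1) + 2 * ξ * a t ^ (1 - κ) := by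
    rw [← hE, emdenEnergy]
    field_simp
  linarith [mul_nonneg (sq_nonneg (a' t)) hκ1.le]

theorem exists_neg_of_hasDerivAt_le_of_neg {f f' : ℝ → ℝ} {t₀ C : ℝ}
    (hf : ∀ t ∈ Ici t₀, HasDerivAt f (f' t) t) (hf' : ∀ t ∈ Ici t₀, f' t ≤ C) (hC : C < 0) :
    ∃ t ∈ Ici t₀, f t < 0 := by
  set T := t₀ + (|f t₀| + 1) / -C
  have hT : t₀ ≤ T := le_add_of_nonneg_right (div_nonneg (by positivity) (by linarith))
  refine ⟨T, hT, ?_⟩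
  have hdrop : C * (T - t₀) = -(|f t₀| + 1) := by
    simp only [T]
    field_simp [hC.ne]
    ring
  have := (convex_Ici t₀).image_sub_le_mul_sub_of_hasDerivAt_le hf hf' self_mem_Ici hT hT
  linarith [le_abs_self (f t₀)]

theorem emden_blowup_finite_time_general
    (κ ξ a₀ a₁ : ℝ) (hκ : 1 < κ) (hξ : ξ < 0) (ha₀ : 0 < a₀)
    (ha₁ : a₁ < Real.sqrt (-2 * ξ / (κ - 1)) * a₀ ^ ((1 - κ) / 2))
    (a a' a'' : ℝ → ℝ)
    (ha : ∀ t ∈ Set.Ici (0 : ℝ), HasDerivAt a (a' t) t)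
    (ha' : ∀ t ∈ Set.Ici (0 : ℝ), HasDerivAt a' (a'' t) t)
    (hpos : ∀ t ∈ Set.Ici (0 : ℝ), 0 < a t)
    (hODE : ∀ t ∈ Set.Ici (0 : ℝ), a'' t = ξ / a t ^ κ)
    (h0 : a 0 = a₀) (h1 : a' 0 = a₁) : False := by
  have hsol : ∀ t ∈ Ici (0 : ℝ), HasDerivAt a' (ξ / a t ^ κ) t :=
    fun t ht => hODE t ht ▸ ha' t ht
  have hconcave : AntitoneOn a' (Ici 0) := (convex_Ici 0).antitoneOn_of_hasDerivAt_nonpos hsol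
    fun t ht => div_nonpos_of_nonpos_of_nonneg hξ.le (rpow_nonneg (hpos t ht).le κ)
  have hmono : ∀ t ∈ Ici (0 : ℝ), 0 ≤ a' t := hasDerivAt_nonneg_of_antitoneOn_of_bddBelow ha
    hconcave ⟨0, by rintro _ ⟨t, ht, rfl⟩; exact (hpos t ht).le⟩
  have hE0 : emdenEnergy κ ξ a a' 0 < 0 := by
    have := sq_lt_mul_rpow_of_lt_sqrt_mul_rpow (h1 ▸ hmono 0 self_mem_Ici)
      (div_nonneg (by linarith) (by linarith)) ha₀ ha₁
    rw [neg_mul, neg_div, neg_mul] at this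
    rw [emdenEnergy, h0, h1]
    linarith
  set M := (emdenEnergy κ ξ a a' 0 * (κ - 1) / (2 * ξ)) ^ (1 - κ)⁻¹
  have hbound : ∀ t ∈ Ici (0 : ℝ), a t ≤ M := fun t ht => le_rpow_of_emdenEnergy_eq_of_neg hκ hξ
    (hpos t ht) (emdenEnergy_eq_of_hasDerivAt hκ.ne' hpos ha hsol t ht) hE0
  have hM : 0 < M := (hpos 0 self_mem_Ici).trans_le (hbound 0 self_mem_Ici)
  have hdecel : ∀ t ∈ Ici (0 : ℝ), ξ / a t ^ κ ≤ ξ / M ^ κ := fun t ht => by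
    have := div_le_div_of_nonneg_left (neg_nonneg.2 hξ.le) (rpow_pos_of_pos (hpos t ht) κ)
      (rpow_le_rpow (hpos t ht).le (hbound t ht) (by linarith))
    rwa [neg_div, neg_div, neg_le_neg_iff] at this
  obtain ⟨T, hT, hneg⟩ := exists_neg_of_hasDerivAt_le_of_neg hsol hdecel
    (div_neg_of_neg_of_pos hξ (rpow_pos_of_pos hM κ))
  exact hneg.not_ge (hmono T hT)

/-- Emden equation, blowup case: if `κ > 1`, `ξ < 0` and
`a₁ < √(−2ξ/(κ−1)) a₀^{(1−κ)/2}`, then there is no globally defined positive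
`C²` solution on `[0,∞)` of `a'' = ξ/a^κ`, `a(0) = a₀ > 0`, `a'(0) = a₁`:
every such solution reaches zero in finite time. -/
theorem emden_blowup_finite_time
    (κ ξ a₀ a₁ : ℝ) (hκ : 1 < κ) (hξ : ξ < 0) (ha₀ : 0 < a₀)
    (ha₁ : a₁ < Real.sqrt (-2 * ξ / (κ - 1)) * a₀ ^ ((1 - κ) / 2))
    (a a' a'' : ℝ → ℝ)
    (ha : ∀ t ∈ Set.Ici (0 : ℝ), HasDerivAt a (a' t) t)
    (ha' : ∀ t ∈ Set.Ici (0 : ℝ), HasDerivAt a' (a'' t) t)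
    (ha''c : ContinuousOn a'' (Set.Ici 0))
    (hpos : ∀ t ∈ Set.Ici (0 : ℝ), 0 < a t)
    (hODE : ∀ t ∈ Set.Ici (0 : ℝ), a'' t = ξ / a t ^ κ)
    (h0 : a 0 = a₀) (h1 : a' 0 = a₁) : False :=
  emden_blowup_finite_time_general κ ξ a₀ a₁ hκ hξ ha₀ ha₁ a a' a'' ha ha' hpos hODE h0 h1
end

section
/- Let κ > 1, ξ < 0, a₀ > 0, and suppose a₁ ≥ √(−2ξ/(κ−1)) · a₀^{(1−κ)/2}. Then there exists a twice continuously differentiable function a : [0,∞) → ℝ with a(t) > 0 for all t ≥ 0, a''(t) = ξ / a(t)^κ for all t ≥ 0, a(0) = a₀, a'(0) = a₁, and a(t) → +∞ as t → +∞. -/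
/-!
Energy conservation reduces the equation to the autonomous first-order equation `a' = v(a)` with
`v(s) = √(E - 2ξ/(κ-1) s^(1-κ))`, where the hypothesis on `a₁` is exactly `E ≥ 0`, so that
`v > 0` on `(0, ∞)`. This is solved by quadrature: `a` is the inverse of
`x ↦ ∫_{a₀}^x ds / v(s)`. Since `ξ < 0`, `v` decreases, so `v ≤ a₁` on `[a₀, ∞)` and the time
integral diverges; hence the solution exists for all `t ≥ 0` and tends to `∞`. Differentiating
`a' = v(a)` gives `a'' = v'(a) v(a) = ξ / a^κ`.
-/

open Real Set Filter Topology Function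

section Inverse

variable {α β : Type*} [LinearOrder α] [Preorder β] [Nonempty α]

theorem StrictMonoOn.monotoneOn_invFunOn {F : α → β} {s : Set α} {t : Set β}
    (hmono : StrictMonoOn F s) (hsurj : SurjOn F s t) : MonotoneOn (invFunOn F s) t := by
  intro y hy y' hy' hyy'
  rw [← hmono.le_iff_le (hsurj.mapsTo_invFunOn hy) (hsurj.mapsTo_invFunOn hy'),
    hsurj.rightInvOn_invFunOn hy, hsurj.rightInvOn_invFunOn hy']
  exact hyy'

end Inverse

section RealInverse

variable {F : ℝ → ℝ} {x₁ : ℝ}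

theorem surjOn_Ici_of_continuousOn_of_tendsto_atTop (hc : ContinuousOn F (Ici x₁))
    (htop : Tendsto F atTop atTop) : SurjOn F (Ici x₁) (Ici (F x₁)) := by
  intro t ht
  obtain ⟨X, hXt, hX⟩ :=
    ((htop.eventually (eventually_ge_atTop t)).and (eventually_ge_atTop x₁)).exists
  obtain ⟨x, hx, rfl⟩ := intermediate_value_Icc hX (hc.mono Icc_subset_Ici_self) ⟨ht, hXt⟩
  exact ⟨x, hx.1, rfl⟩

theorem StrictMonoOn.continuousAt_invFunOn (hmono : StrictMonoOn F (Ici x₁))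
    (hsurj : SurjOn F (Ici x₁) (Ici (F x₁))) {t : ℝ} (ht : F x₁ < t) :
    ContinuousAt (invFunOn F (Ici x₁)) t := by
  have hat : x₁ < invFunOn F (Ici x₁) t := by
    refine lt_of_le_of_ne (hsurj.mapsTo_invFunOn ht.le) fun h => ht.ne ?_
    rw [h, hsurj.rightInvOn_invFunOn ht.le]
  refine continuousAt_of_monotoneOn_of_image_mem_nhds (hmono.monotoneOn_invFunOn hsurj)
    (Ici_mem_nhds ht) (mem_of_superset (Ici_mem_nhds hat) fun x hx => ?_)
  exact ⟨F x, hmono.monotoneOn self_mem_Ici hx hx, hmono.injOn.leftInvOn_invFunOn hx⟩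

theorem StrictMonoOn.tendsto_invFunOn_atTop (hmono : StrictMonoOn F (Ici x₁))
    (hsurj : SurjOn F (Ici x₁) (Ici (F x₁))) : Tendsto (invFunOn F (Ici x₁)) atTop atTop := by
  refine tendsto_atTop.2 fun M => ?_
  have hM : max M x₁ ∈ Ici x₁ := le_max_right M x₁
  have hFM : F (max M x₁) ∈ Ici (F x₁) := hmono.monotoneOn self_mem_Ici hM hM
  filter_upwards [eventually_ge_atTop (F (max M x₁))] with t ht
  calc M ≤ max M x₁ := le_max_left M x₁
    _ = invFunOn F (Ici x₁) (F (max M x₁)) := (hmono.injOn.leftInvOn_invFunOn hM).symm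
    _ ≤ invFunOn F (Ici x₁) t :=
      hmono.monotoneOn_invFunOn hsurj hFM (le_trans hFM ht) ht

end RealInverse

section Quadrature

variable {f g : ℝ → ℝ} {m x₀ : ℝ}

theorem hasDerivAt_integral_of_continuousOn_Ioi (hf : ContinuousOn f (Ioi m)) (hx₀ : m < x₀)
    {x : ℝ} (hx : m < x) : HasDerivAt (fun x => ∫ s in x₀..x, f s) (f x) x :=
  intervalIntegral.integral_hasDerivAt_right
    ((hf.mono fun _ hs => lt_of_lt_of_le (lt_min hx₀ hx) hs.1).intervalIntegrable)
    (hf.stronglyMeasurableAtFilter isOpen_Ioi x hx) (hf.continuousAt (Ioi_mem_nhds hx))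

theorem tendsto_integral_atTop_of_le {c : ℝ} (hf : ContinuousOn f (Ici x₀)) (hc : 0 < c)
    (hfc : ∀ x ∈ Ici x₀, c ≤ f x) : Tendsto (fun x => ∫ s in x₀..x, f s) atTop atTop := by
  have hlin : Tendsto (fun x => (x - x₀) * c) atTop atTop :=
    (tendsto_atTop_add_const_right _ (-x₀) tendsto_id).atTop_mul_const hc
  refine tendsto_atTop_mono' atTop ?_ hlin
  filter_upwards [eventually_ge_atTop x₀] with x hx
  have hint : ∫ _ in x₀..x, c ≤ ∫ s in x₀..x, f s :=
    intervalIntegral.integral_mono_on hx intervalIntegrable_const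
      ((hf.mono Icc_subset_Ici_self).intervalIntegrable_of_Icc hx) fun s hs => hfc s hs.1
  simpa [intervalIntegral.integral_const, smul_eq_mul] using hint

theorem exists_hasDerivAt_comp_tendsto_atTop {B : ℝ} (hx₀ : m < x₀)
    (hg : ContinuousOn g (Ioi m)) (hg_pos : ∀ x ∈ Ioi m, 0 < g x) (hgB : ∀ x ∈ Ici x₀, g x ≤ B) :
    ∃ a : ℝ → ℝ, a 0 = x₀ ∧ (∀ t ∈ Ici (0 : ℝ), x₀ ≤ a t ∧ HasDerivAt a (g (a t)) t) ∧
      Tendsto a atTop atTop := by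
  set F : ℝ → ℝ := fun x => ∫ s in x₀..x, (g s)⁻¹
  have hginv : ContinuousOn (fun x => (g x)⁻¹) (Ioi m) := hg.inv₀ fun x hx => (hg_pos x hx).ne'
  have hF : ∀ x ∈ Ioi m, HasDerivAt F (g x)⁻¹ x := fun x hx =>
    hasDerivAt_integral_of_continuousOn_Ioi hginv hx₀ hx
  -- inverting `F` on `[x₁, ∞)` with `x₁ < x₀` defines `a` on a neighbourhood of `t = 0`
  obtain ⟨x₁, hmx₁, hx₁x₀⟩ := exists_between hx₀
  have hx₁ : Ici x₁ ⊆ Ioi m := Ici_subset_Ioi.2 hmx₁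
  have hx₀₁ : x₀ ∈ Ici x₁ := hx₁x₀.le
  have hFc : ContinuousOn F (Ici x₁) := fun x hx =>
    (hF x (hx₁ hx)).continuousAt.continuousWithinAt
  have hmono : StrictMonoOn F (Ici x₁) :=
    strictMonoOn_of_hasDerivWithinAt_pos (convex_Ici x₁) hFc
      (fun x hx => (hF x (hx₁ (interior_subset hx))).hasDerivWithinAt)
      fun x hx => inv_pos.2 (hg_pos x (hx₁ (interior_subset hx)))
  have htop : Tendsto F atTop atTop :=
    tendsto_integral_atTop_of_le (hginv.mono (Ici_subset_Ioi.2 hx₀))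
      (inv_pos.2 ((hg_pos x₀ hx₀).trans_le (hgB x₀ self_mem_Ici)))
      fun x hx => inv_anti₀ (hg_pos x (lt_of_lt_of_le hx₀ hx)) (hgB x hx)
  have hsurj := surjOn_Ici_of_continuousOn_of_tendsto_atTop hFc htop
  have hFx₀ : F x₀ = 0 := intervalIntegral.integral_same
  have hFx₁ : F x₁ < 0 := hFx₀ ▸ hmono self_mem_Ici hx₀₁ hx₁x₀
  have ha₀ : invFunOn F (Ici x₁) 0 = x₀ := hFx₀ ▸ hmono.injOn.leftInvOn_invFunOn hx₀₁
  refine ⟨invFunOn F (Ici x₁), ha₀, fun t ht => ⟨?_, ?_⟩, hmono.tendsto_invFunOn_atTop hsurj⟩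
  · exact ha₀ ▸ hmono.monotoneOn_invFunOn hsurj hFx₁.le (hFx₁.le.trans ht) ht
  · have hFt : F x₁ < t := hFx₁.trans_le ht
    have hat := hx₁ (hsurj.mapsTo_invFunOn hFt.le)
    simpa only [inv_inv] using
      HasDerivAt.of_local_left_inverse (hmono.continuousAt_invFunOn hsurj hFt) (hF _ hat)
        (inv_pos.2 (hg_pos _ hat)).ne'
        (eventually_of_mem (Ioi_mem_nhds hFt) fun y hy =>
          hsurj.rightInvOn_invFunOn (Ioi_subset_Ici_self hy))

end Quadrature

theorem sq_le_of_sqrt_mul_rpow_half_le {c x y p : ℝ} (hc : 0 ≤ c) (hx : 0 ≤ x)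
    (h : √c * x ^ (p / 2) ≤ y) : c * x ^ p ≤ y ^ 2 :=
  calc c * x ^ p = (√c * x ^ (p / 2)) ^ 2 := by
        rw [mul_pow, sq_sqrt hc, ← rpow_natCast, ← rpow_mul hx]
        norm_num
    _ ≤ y ^ 2 := pow_le_pow_left₀ (by positivity) h 2

/-- Conservation of the energy `a'² / 2 + ξ a^(1-κ) / (κ - 1)` for `a'' = ξ / a^κ`: at the level
`E / 2` an increasing solution has speed `emdenSpeed κ ξ E a`. -/
noncomputable def emdenSpeed (κ ξ E s : ℝ) : ℝ := √(E - 2 * ξ / (κ - 1) * s ^ (1 - κ))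

section EmdenSpeed

variable {κ ξ E : ℝ}

theorem emdenSpeed_pos (hκ : 1 < κ) (hξ : ξ < 0) (hE : 0 ≤ E) {s : ℝ} (hs : 0 < s) :
    0 < emdenSpeed κ ξ E s := by
  have hcoef : 2 * ξ / (κ - 1) < 0 := div_neg_of_neg_of_pos (by linarith) (by linarith)
  have hpow := rpow_pos_of_pos hs (1 - κ)
  exact sqrt_pos.2 (by nlinarith)

theorem continuousOn_emdenSpeed : ContinuousOn (emdenSpeed κ ξ E) (Ioi 0) :=
  (continuousOn_const.sub (continuousOn_const.mul
    (continuousOn_id.rpow_const fun _ hs => Or.inl (ne_of_gt hs)))).sqrt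

theorem antitoneOn_emdenSpeed (hκ : 1 < κ) (hξ : ξ ≤ 0) :
    AntitoneOn (emdenSpeed κ ξ E) (Ioi 0) := by
  intro x hx y _ hxy
  have hcoef : 2 * ξ / (κ - 1) ≤ 0 := div_nonpos_of_nonpos_of_nonneg (by linarith) (by linarith)
  have hpow : y ^ (1 - κ) ≤ x ^ (1 - κ) := rpow_le_rpow_of_nonpos hx hxy (by linarith)
  exact sqrt_le_sqrt (by nlinarith)

theorem hasDerivAt_emdenSpeed (hκ : κ ≠ 1) {s : ℝ} (hs : 0 < s) (hv : emdenSpeed κ ξ E s ≠ 0) :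
    HasDerivAt (emdenSpeed κ ξ E) (ξ / s ^ κ / emdenSpeed κ ξ E s) s := by
  have hinner : E - 2 * ξ / (κ - 1) * s ^ (1 - κ) ≠ 0 := (sqrt_ne_zero'.1 hv).ne'
  refine ((((hasDerivAt_id s).rpow_const (p := 1 - κ) (Or.inl hs.ne')).const_mul
    (2 * ξ / (κ - 1))).const_sub E |>.sqrt hinner).congr_deriv ?_
  have hκ' : κ - 1 ≠ 0 := sub_ne_zero.2 hκ
  rw [show (1 : ℝ) - κ - 1 = -κ by ring, id, rpow_neg hs.le, ← emdenSpeed]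
  field_simp
  ring

theorem emdenSpeed_sq_add {a₀ a₁ : ℝ} (ha₁ : 0 ≤ a₁) :
    emdenSpeed κ ξ (a₁ ^ 2 + 2 * ξ / (κ - 1) * a₀ ^ (1 - κ)) a₀ = a₁ := by
  rw [emdenSpeed, add_sub_cancel_right, sqrt_sq ha₁]

end EmdenSpeed

/-- Emden equation, global case: if `κ > 1`, `ξ < 0` and
`a₁ ≥ √(−2ξ/(κ−1)) a₀^{(1−κ)/2}`, there exists a global positive `C²` solution
on `[0,∞)` of `a'' = ξ/a^κ`, `a(0) = a₀ > 0`, `a'(0) = a₁`, with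
`a(t) → +∞` as `t → +∞`. -/
theorem emden_global_existence_negative_xi
    (κ ξ a₀ a₁ : ℝ) (hκ : 1 < κ) (hξ : ξ < 0) (ha₀ : 0 < a₀)
    (ha₁ : Real.sqrt (-2 * ξ / (κ - 1)) * a₀ ^ ((1 - κ) / 2) ≤ a₁) :
    ∃ a a' a'' : ℝ → ℝ,
      (∀ t ∈ Set.Ici (0 : ℝ), HasDerivAt a (a' t) t) ∧
      (∀ t ∈ Set.Ici (0 : ℝ), HasDerivAt a' (a'' t) t) ∧
      ContinuousOn a'' (Set.Ici 0) ∧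
      (∀ t ∈ Set.Ici (0 : ℝ), 0 < a t) ∧
      (∀ t ∈ Set.Ici (0 : ℝ), a'' t = ξ / a t ^ κ) ∧
      a 0 = a₀ ∧ a' 0 = a₁ ∧
      Filter.Tendsto a Filter.atTop Filter.atTop := by
  set E := a₁ ^ 2 + 2 * ξ / (κ - 1) * a₀ ^ (1 - κ)
  have hE : 0 ≤ E := by
    have h := sq_le_of_sqrt_mul_rpow_half_le
      (div_nonneg (by linarith) (by linarith)) ha₀.le ha₁
    have : -2 * ξ / (κ - 1) * a₀ ^ (1 - κ) = -(2 * ξ / (κ - 1) * a₀ ^ (1 - κ)) := by ring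
    linarith
  have hv₀ : emdenSpeed κ ξ E a₀ = a₁ :=
    emdenSpeed_sq_add (le_trans (by positivity) ha₁)
  have hv : ∀ s ∈ Ioi (0 : ℝ), 0 < emdenSpeed κ ξ E s := fun s hs => emdenSpeed_pos hκ hξ hE hs
  obtain ⟨a, ha0, ha, htop⟩ :=
    exists_hasDerivAt_comp_tendsto_atTop ha₀ continuousOn_emdenSpeed hv fun s hs =>
      hv₀ ▸ antitoneOn_emdenSpeed hκ hξ.le ha₀ (ha₀.trans_le hs) hs
  have hapos : ∀ t ∈ Ici (0 : ℝ), 0 < a t := fun t ht => ha₀.trans_le (ha t ht).1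
  have hacont : ContinuousOn a (Ici 0) := fun t ht =>
    (ha t ht).2.continuousAt.continuousWithinAt
  refine ⟨a, fun t => emdenSpeed κ ξ E (a t), fun t => ξ / a t ^ κ, fun t ht => (ha t ht).2,
    fun t ht => ?_, ?_, hapos, fun _ _ => rfl, ha0, by simp only [ha0, hv₀], htop⟩
  · have hvt := (hv _ (hapos t ht)).ne'
    have h := (hasDerivAt_emdenSpeed hκ.ne' (hapos t ht) hvt).comp t (ha t ht).2
    rwa [div_mul_cancel₀ _ hvt] at h
  · exact continuousOn_const.div (hacont.rpow_const fun t ht => Or.inl (hapos t ht).ne')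
      fun t ht => (rpow_pos_of_pos (hapos t ht) κ).ne'
end

section
/- Let κ > 1, ξ > 0, a₀ > 0, and a₁ ∈ ℝ. Then there exists a twice continuously differentiable function a : [0,∞) → ℝ with a(t) > 0 for all t ≥ 0, a''(t) = ξ / a(t)^κ for all t ≥ 0, a(0) = a₀, a'(0) = a₁, and a(t) → +∞ as t → +∞. Moreover, every twice continuously differentiable function a : [0,∞) → ℝ that is positive and satisfies this initial-value problem tends to +∞ as t → +∞. -/
open Real Set Filter Topology

/-!
A positive solution has `a'' > 0`, so `a'` increases. If `a'` ever becomes positive, `a` grows at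
least linearly; otherwise `a` decreases, hence `a ≤ a₀` and `a'' ≥ ξ / a₀ ^ κ`, which forces `a'`
to become positive after all.

For existence, the energy `a' ^ 2 / 2 + ξ / ((κ - 1) * a ^ (κ - 1))` is conserved, so along a
solution the position is an explicit function of the velocity `v`, and `v` increases through
`(-s, s)`, where `s` is the limiting speed. Time is recovered as `t = ∫ dv / a''`; near `±s` the
integrand is at least of order `1 / (s ∓ v)`, so `t` runs through all of `ℝ`, and inverting it
gives a solution defined for all times.
-/

theorem tendsto_atTop_of_le_hasDerivAt {f f' : ℝ → ℝ} {t₀ d : ℝ} (hd : 0 < d)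
    (hf : ∀ t ∈ Ici t₀, HasDerivAt f (f' t) t) (hf' : ∀ t ∈ Ici t₀, d ≤ f' t) :
    Tendsto f atTop atTop := by
  have hlin : ∀ t ∈ Ici t₀, d * (t - t₀) ≤ f t - f t₀ := fun t ht =>
    (convex_Ici t₀).mul_sub_le_image_sub_of_le_deriv
      (fun x hx => (hf x hx).continuousAt.continuousWithinAt)
      (fun x hx => (hf x (interior_subset hx)).differentiableAt.differentiableWithinAt)
      (fun x hx => (hf x (interior_subset hx)).deriv ▸ hf' x (interior_subset hx))
      t₀ (mem_Ici.2 le_rfl) t ht ht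
  refine tendsto_atTop_mono' atTop ?_ <| tendsto_atTop_add_const_left _ (f t₀) <|
    (tendsto_atTop_add_const_right _ (-t₀) tendsto_id).const_mul_atTop hd
  filter_upwards [eventually_ge_atTop t₀] with t ht
  rw [id, ← sub_eq_add_neg]
  linarith [hlin t ht]

theorem tendsto_nhdsLT_atTop_of_div_sub_le_deriv {f g : ℝ → ℝ} {b K : ℝ} (hK : 0 < K)
    (hf : ∀ᶠ x in 𝓝[<] b, HasDerivAt f (g x) x) (hg : ∀ᶠ x in 𝓝[<] b, K / (b - x) ≤ g x) :
    Tendsto f (𝓝[<] b) atTop := by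
  obtain ⟨x₀, hx₀, hsub⟩ := mem_nhdsLT_iff_exists_Ioo_subset.1 (hf.and hg)
  have hlog : ∀ x ∈ Ioo x₀ b,
      HasDerivAt (fun x => f x + K * log (b - x)) (g x - K / (b - x)) x := by
    intro x hx
    have hbx : b - x ≠ 0 := (sub_pos.2 hx.2).ne'
    exact ((hsub hx).1.fun_add
      ((((hasDerivAt_id' x).const_sub b).log hbx).const_mul K)).congr_deriv (by ring)
  have hmono : MonotoneOn (fun x => f x + K * log (b - x)) (Ioo x₀ b) :=
    monotoneOn_of_hasDerivWithinAt_nonneg (convex_Ioo x₀ b)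
      (fun x hx => (hlog x hx).continuousAt.continuousWithinAt)
      (fun x hx => (hlog x (interior_subset hx)).hasDerivWithinAt)
      (fun x hx => sub_nonneg.2 (hsub (interior_subset hx)).2)
  obtain ⟨x₁, hx₁⟩ := nonempty_Ioo.2 (mem_Iio.1 hx₀)
  have hgap : Tendsto (fun x => b - x) (𝓝[<] b) (𝓝[>] 0) := by
    refine tendsto_nhdsWithin_iff.2 ⟨?_, eventually_nhdsWithin_of_forall fun x hx =>
      mem_Ioi.2 (sub_pos.2 hx)⟩
    exact ((continuous_sub_left b).tendsto' b 0 (sub_self b)).mono_left nhdsWithin_le_nhds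
  have hlower : Tendsto (fun x => f x₁ + K * log (b - x₁) - K * log (b - x)) (𝓝[<] b) atTop :=
    tendsto_atTop_add_const_left _ _ <| tendsto_neg_atBot_atTop.comp <|
      (tendsto_log_nhdsGT_zero.comp hgap).const_mul_atBot hK
  refine tendsto_atTop_mono' _ ?_ hlower
  filter_upwards [Ioo_mem_nhdsLT (show x₁ < b from hx₁.2)] with x hx
  have := hmono hx₁ ⟨hx₁.1.trans hx.1, hx.2⟩ hx.1.le
  simp only at this
  linarith

theorem hasDerivAt_integral_of_continuousOn_Ioo {g : ℝ → ℝ} {a b x₀ v : ℝ}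
    (hg : ContinuousOn g (Ioo a b)) (hx₀ : x₀ ∈ Ioo a b) (hv : v ∈ Ioo a b) :
    HasDerivAt (fun v => ∫ x in x₀..v, g x) (g v) v :=
  intervalIntegral.integral_hasDerivAt_right
    (hg.mono (ordConnected_Ioo.uIcc_subset hx₀ hv)).intervalIntegrable
    (hg.stronglyMeasurableAtFilter isOpen_Ioo v hv) (hg.continuousAt (isOpen_Ioo.mem_nhds hv))

theorem exists_hasDerivAt_inverse {T g : ℝ → ℝ} {a b : ℝ} (hab : a < b)
    (hT : ∀ x ∈ Ioo a b, HasDerivAt T (g x) x) (hg : ∀ x ∈ Ioo a b, 0 < g x)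
    (hbot : Tendsto T (𝓝[>] a) atBot) (htop : Tendsto T (𝓝[<] b) atTop) :
    ∃ w : ℝ → ℝ, (∀ t, w t ∈ Ioo a b) ∧ (∀ x ∈ Ioo a b, w (T x) = x) ∧
      ∀ t, HasDerivAt w (g (w t))⁻¹ t := by
  have hcont : ContinuousOn T (Ioo a b) := fun x hx => (hT x hx).continuousAt.continuousWithinAt
  have hmono : StrictMonoOn T (Ioo a b) :=
    strictMonoOn_of_hasDerivWithinAt_pos (convex_Ioo a b) hcont
      (fun x hx => (hT x (interior_subset hx)).hasDerivWithinAt)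
      (fun x hx => hg x (interior_subset hx))
  have hsurj : SurjOn T (Ioo a b) univ := hcont.surjOn_of_tendsto (nonempty_Ioo.2 hab)
    ((tendsto_comp_coe_Ioo_atBot hab).2 hbot) ((tendsto_comp_coe_Ioo_atTop hab).2 htop)
  choose w hwI hTw using fun t => hsurj (mem_univ t)
  have hwT : ∀ x ∈ Ioo a b, w (T x) = x := fun x hx => hmono.injOn (hwI _) hx (hTw _)
  have hw_mono : Monotone w := fun s t hst =>
    (hmono.le_iff_le (hwI s) (hwI t)).1 (by rwa [hTw, hTw])
  have hw_range : range w = Ioo a b :=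
    (range_subset_iff.2 hwI).antisymm fun x hx => ⟨T x, hwT x hx⟩
  refine ⟨w, hwI, hwT, fun t => ?_⟩
  have hw_cont : ContinuousAt w t :=
    continuousAt_of_monotoneOn_of_image_mem_nhds (hw_mono.monotoneOn univ) univ_mem
      (by rw [image_univ, hw_range]; exact isOpen_Ioo.mem_nhds (hwI t))
  exact HasDerivAt.of_local_left_inverse hw_cont (hT _ (hwI t)) (hg _ (hwI t)).ne'
    (Eventually.of_forall hTw)

namespace Emden

theorem tendsto_atTop_of_hasDerivAt {κ ξ : ℝ} (hκ : 0 ≤ κ) (hξ : 0 < ξ) {a a' a'' : ℝ → ℝ}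
    (ha : ∀ t ∈ Ici (0 : ℝ), HasDerivAt a (a' t) t)
    (ha' : ∀ t ∈ Ici (0 : ℝ), HasDerivAt a' (a'' t) t)
    (hpos : ∀ t ∈ Ici (0 : ℝ), 0 < a t) (heq : ∀ t ∈ Ici (0 : ℝ), a'' t = ξ / a t ^ κ) :
    Tendsto a atTop atTop := by
  have ha'_mono : MonotoneOn a' (Ici 0) :=
    monotoneOn_of_hasDerivWithinAt_nonneg (convex_Ici 0)
      (fun t ht => (ha' t ht).continuousAt.continuousWithinAt)
      (fun t ht => (ha' t (interior_subset ht)).hasDerivWithinAt)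
      (fun t ht => heq t (interior_subset ht) ▸ by positivity [hpos t (interior_subset ht)])
  obtain ⟨t₀, ht₀, hv₀⟩ : ∃ t₀ ∈ Ici (0 : ℝ), 0 < a' t₀ := by
    by_contra! hv
    have ha_anti : AntitoneOn a (Ici 0) :=
      antitoneOn_of_hasDerivWithinAt_nonpos (convex_Ici 0)
        (fun t ht => (ha t ht).continuousAt.continuousWithinAt)
        (fun t ht => (ha t (interior_subset ht)).hasDerivWithinAt)
        (fun t ht => hv t (interior_subset ht))
    -- while `a` does not increase, `a ≤ a 0` keeps the acceleration above `ξ / a 0 ^ κ`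
    have ha'_top : Tendsto a' atTop atTop :=
      tendsto_atTop_of_le_hasDerivAt (div_pos hξ (rpow_pos_of_pos (hpos 0 self_mem_Ici) κ)) ha'
        fun t ht => heq t ht ▸ div_le_div_of_nonneg_left hξ.le (rpow_pos_of_pos (hpos t ht) κ)
          (rpow_le_rpow (hpos t ht).le (ha_anti self_mem_Ici ht ht) hκ)
    obtain ⟨t, ht, hvt⟩ := ((eventually_ge_atTop 0).and (ha'_top.eventually_gt_atTop 0)).exists
    exact (hv t ht).not_gt hvt
  exact tendsto_atTop_of_le_hasDerivAt hv₀ (fun t ht => ha t (mem_Ici.2 (ht₀.trans ht)))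
    fun t ht => ha'_mono ht₀ (mem_Ici.2 (ht₀.trans ht)) ht

variable {κ ξ s v : ℝ}

/-- The position `a` at velocity `v` on the orbit of limiting speed `s`, obtained by solving the
energy identity `v ^ 2 / 2 + ξ / ((κ - 1) * a ^ (κ - 1)) = s ^ 2 / 2` for `a`. -/
noncomputable def position (κ ξ s v : ℝ) : ℝ := (2 * ξ / (κ - 1) / (s ^ 2 - v ^ 2)) ^ (κ - 1)⁻¹

/-- `dt / dv = 1 / a''` along the orbit. -/
noncomputable def timeDensity (κ ξ s v : ℝ) : ℝ := position κ ξ s v ^ κ / ξ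

theorem position_pos (hκ : 1 < κ) (hξ : 0 < ξ) (hv : v ∈ Ioo (-s) s) :
    0 < position κ ξ s v := by
  have : 0 < s ^ 2 - v ^ 2 := by nlinarith [hv.1, hv.2]
  have : 0 < κ - 1 := sub_pos.2 hκ
  unfold position
  positivity

theorem position_rpow_sub_one (hκ : 1 < κ) (hξ : 0 < ξ) (hv : v ∈ Ioo (-s) s) :
    position κ ξ s v ^ (κ - 1) = 2 * ξ / (κ - 1) / (s ^ 2 - v ^ 2) := by
  have : 0 < s ^ 2 - v ^ 2 := by nlinarith [hv.1, hv.2]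
  have : 0 < κ - 1 := sub_pos.2 hκ
  exact rpow_inv_rpow (by positivity) this.ne'

theorem position_rpow (hκ : 1 < κ) (hξ : 0 < ξ) (hv : v ∈ Ioo (-s) s) :
    position κ ξ s v ^ κ = 2 * ξ / (κ - 1) / (s ^ 2 - v ^ 2) * position κ ξ s v := by
  rw [← position_rpow_sub_one hκ hξ hv, ← rpow_add_one (position_pos hκ hξ hv).ne',
    sub_add_cancel]

theorem timeDensity_pos (hκ : 1 < κ) (hξ : 0 < ξ) (hv : v ∈ Ioo (-s) s) :
    0 < timeDensity κ ξ s v :=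
  div_pos (rpow_pos_of_pos (position_pos hκ hξ hv) κ) hξ

theorem timeDensity_neg : timeDensity κ ξ s (-v) = timeDensity κ ξ s v := by
  simp only [timeDensity, position, neg_sq]

theorem hasDerivAt_position (hκ : 1 < κ) (hξ : 0 < ξ) (hv : v ∈ Ioo (-s) s) :
    HasDerivAt (position κ ξ s) (v * timeDensity κ ξ s v) v := by
  have hu : 0 < s ^ 2 - v ^ 2 := by nlinarith [hv.1, hv.2]
  have hκ1 : 0 < κ - 1 := sub_pos.2 hκ
  have hy := (hasDerivAt_const v (2 * ξ / (κ - 1))).fun_div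
    ((hasDerivAt_const v (s ^ 2)).fun_sub (hasDerivAt_pow 2 v)) hu.ne'
  refine (hy.rpow_const (Or.inl (by positivity))).congr_deriv ?_
  rw [timeDensity, position_rpow hκ hξ hv, rpow_sub_one (by positivity), ← position]
  field_simp
  ring

theorem continuousOn_timeDensity (hκ : 1 < κ) (hξ : 0 < ξ) :
    ContinuousOn (timeDensity κ ξ s) (Ioo (-s) s) := fun _ hx =>
  (((hasDerivAt_position hκ hξ hx).continuousAt.rpow_const
    (Or.inl (position_pos hκ hξ hx).ne')).div_const ξ).continuousWithinAt

theorem position_eq_of_sq (hκ : 1 < κ) (hξ : 0 < ξ) {a₀ a₁ : ℝ} (ha₀ : 0 < a₀)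
    (hs : s ^ 2 = a₁ ^ 2 + 2 * ξ / (κ - 1) / a₀ ^ (κ - 1)) : position κ ξ s a₁ = a₀ := by
  have hκ1 : 0 < κ - 1 := sub_pos.2 hκ
  rw [position, show s ^ 2 - a₁ ^ 2 = 2 * ξ / (κ - 1) / a₀ ^ (κ - 1) by rw [hs]; ring,
    div_div_cancel₀ (by positivity), rpow_rpow_inv ha₀.le hκ1.ne']

theorem inv_mul_div_sub_le_timeDensity (hκ : 1 < κ) (hξ : 0 < ξ) (hs : 0 < s)
    (hv : v ∈ Ioo (-s) s) (hslow : s ^ 2 - v ^ 2 ≤ 2 * ξ / (κ - 1)) :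
    ((κ - 1) * s)⁻¹ / (s - v) ≤ timeDensity κ ξ s v := by
  have hκ1 : 0 < κ - 1 := sub_pos.2 hκ
  have hsv : 0 < s - v := sub_pos.2 hv.2
  have hsv' : 0 < s + v := by linarith [hv.1]
  have hu : 0 < s ^ 2 - v ^ 2 := by nlinarith
  have hy : 1 ≤ 2 * ξ / (κ - 1) / (s ^ 2 - v ^ 2) := (one_le_div hu).2 hslow
  have hφ : 1 ≤ position κ ξ s v := one_le_rpow hy (inv_nonneg.2 hκ1.le)
  calc ((κ - 1) * s)⁻¹ / (s - v) = 2 / ((κ - 1) * (s - v) * (2 * s)) := by field_simp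
    _ ≤ 2 / ((κ - 1) * (s - v) * (s + v)) := by gcongr; linarith [hv.2]
    _ = 2 * ξ / (κ - 1) / (s ^ 2 - v ^ 2) / ξ := by field_simp; ring
    _ ≤ 2 * ξ / (κ - 1) / (s ^ 2 - v ^ 2) * position κ ξ s v / ξ := by
        gcongr
        exact le_mul_of_one_le_right (by positivity) hφ
    _ = timeDensity κ ξ s v := by rw [timeDensity, position_rpow hκ hξ hv]

theorem tendsto_atTop_of_hasDerivAt_timeDensity (hκ : 1 < κ) (hξ : 0 < ξ) (hs : 0 < s)
    {F : ℝ → ℝ} (hF : ∀ v ∈ Ioo (-s) s, HasDerivAt F (timeDensity κ ξ s v) v) :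
    Tendsto F (𝓝[<] s) atTop := by
  have hκ1 : 0 < κ - 1 := sub_pos.2 hκ
  have hslow : Tendsto (fun v => s ^ 2 - v ^ 2) (𝓝[<] s) (𝓝 0) :=
    ((by fun_prop : Continuous fun v : ℝ => s ^ 2 - v ^ 2).tendsto' s 0
      (sub_self _)).mono_left nhdsWithin_le_nhds
  have hI : Ioo (-s) s ∈ 𝓝[<] s := Ioo_mem_nhdsLT (by linarith)
  refine tendsto_nhdsLT_atTop_of_div_sub_le_deriv (K := ((κ - 1) * s)⁻¹) (by positivity)
    (eventually_of_mem hI hF) ?_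
  filter_upwards [hI, hslow.eventually (ge_mem_nhds (by positivity : (0 : ℝ) < 2 * ξ / (κ - 1)))]
    with v hv hv_slow
  exact inv_mul_div_sub_le_timeDensity hκ hξ hs hv hv_slow

theorem exists_forall_hasDerivAt (hκ : 1 < κ) (hξ : 0 < ξ) {a₀ : ℝ} (ha₀ : 0 < a₀) (a₁ : ℝ) :
    ∃ a a' : ℝ → ℝ, (∀ t, HasDerivAt a (a' t) t) ∧ (∀ t, HasDerivAt a' (ξ / a t ^ κ) t) ∧
      (∀ t, 0 < a t) ∧ a 0 = a₀ ∧ a' 0 = a₁ := by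
  have hκ1 : 0 < κ - 1 := sub_pos.2 hκ
  set s := √(a₁ ^ 2 + 2 * ξ / (κ - 1) / a₀ ^ (κ - 1))
  have hs2 : s ^ 2 = a₁ ^ 2 + 2 * ξ / (κ - 1) / a₀ ^ (κ - 1) := sq_sqrt (by positivity)
  have ha₁ : a₁ ∈ Ioo (-s) s := abs_lt.1 <| abs_lt_of_sq_lt_sq
    (by rw [hs2]; exact lt_add_of_pos_right _ (by positivity)) (sqrt_nonneg _)
  have hs : 0 < s := by linarith [ha₁.1, ha₁.2]
  set T := fun v => ∫ x in a₁..v, timeDensity κ ξ s x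
  have hT : ∀ v ∈ Ioo (-s) s, HasDerivAt T (timeDensity κ ξ s v) v := fun v hv =>
    hasDerivAt_integral_of_continuousOn_Ioo (continuousOn_timeDensity hκ hξ) ha₁ hv
  -- `timeDensity` is even, so the divergence at `s` also gives the divergence at `-s`
  have hbot : Tendsto T (𝓝[>] (-s)) atBot := by
    have hT' : ∀ v ∈ Ioo (-s) s, HasDerivAt (fun v => -T (-v)) (timeDensity κ ξ s v) v := by
      intro v hv
      have := ((hT (-v) ⟨by linarith [hv.2], by linarith [hv.1]⟩).comp v (hasDerivAt_neg v)).neg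
      rw [timeDensity_neg] at this
      exact this.congr_deriv (by ring)
    simpa [Function.comp_def] using tendsto_neg_atTop_atBot.comp
      ((tendsto_atTop_of_hasDerivAt_timeDensity hκ hξ hs hT').comp tendsto_neg_nhdsGT_neg)
  obtain ⟨w, hwI, hwT, hw⟩ := exists_hasDerivAt_inverse (by linarith) hT
    (fun v hv => timeDensity_pos hκ hξ hv) hbot
    (tendsto_atTop_of_hasDerivAt_timeDensity hκ hξ hs hT)
  have hw0 : w 0 = a₁ := by simpa [T] using hwT a₁ ha₁
  refine ⟨fun t => position κ ξ s (w t), w, fun t => ?_, fun t => ?_,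
    fun t => position_pos hκ hξ (hwI t), ?_, hw0⟩
  · exact ((hasDerivAt_position hκ hξ (hwI t)).comp t (hw t)).congr_deriv
      (by field_simp [(timeDensity_pos hκ hξ (hwI t)).ne'])
  · simpa only [timeDensity, inv_div] using hw t
  · simpa only [hw0] using position_eq_of_sq hκ hξ ha₀ hs2

end Emden

/-- Emden equation with `ξ > 0`: for any `a₀ > 0` and `a₁ ∈ ℝ` there exists a
global positive `C²` solution of `a'' = ξ/a^κ`, `a(0) = a₀`, `a'(0) = a₁` on
`[0,∞)` with `a(t) → +∞`; moreover every positive `C²` solution of this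
initial-value problem on `[0,∞)` tends to `+∞`. -/
theorem emden_positive_xi_global
    (κ ξ a₀ a₁ : ℝ) (hκ : 1 < κ) (hξ : 0 < ξ) (ha₀ : 0 < a₀) :
    (∃ a a' a'' : ℝ → ℝ,
      (∀ t ∈ Set.Ici (0 : ℝ), HasDerivAt a (a' t) t) ∧
      (∀ t ∈ Set.Ici (0 : ℝ), HasDerivAt a' (a'' t) t) ∧
      ContinuousOn a'' (Set.Ici 0) ∧
      (∀ t ∈ Set.Ici (0 : ℝ), 0 < a t) ∧
      (∀ t ∈ Set.Ici (0 : ℝ), a'' t = ξ / a t ^ κ) ∧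
      a 0 = a₀ ∧ a' 0 = a₁ ∧
      Filter.Tendsto a Filter.atTop Filter.atTop) ∧
    (∀ a a' a'' : ℝ → ℝ,
      (∀ t ∈ Set.Ici (0 : ℝ), HasDerivAt a (a' t) t) →
      (∀ t ∈ Set.Ici (0 : ℝ), HasDerivAt a' (a'' t) t) →
      ContinuousOn a'' (Set.Ici 0) →
      (∀ t ∈ Set.Ici (0 : ℝ), 0 < a t) →
      (∀ t ∈ Set.Ici (0 : ℝ), a'' t = ξ / a t ^ κ) →
      a 0 = a₀ → a' 0 = a₁ →
      Filter.Tendsto a Filter.atTop Filter.atTop) := by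
  have hκ0 : 0 ≤ κ := by linarith
  refine ⟨?_, fun a a' a'' ha ha' _ hpos heq _ _ =>
    Emden.tendsto_atTop_of_hasDerivAt hκ0 hξ ha ha' hpos heq⟩
  obtain ⟨a, a', ha, ha', hpos, h0, h1⟩ := Emden.exists_forall_hasDerivAt hκ hξ ha₀ a₁
  have ha_cont : Continuous a := continuous_iff_continuousAt.2 fun t => (ha t).continuousAt
  have ha''_cont : Continuous fun t => ξ / a t ^ κ :=
    continuous_const.div (ha_cont.rpow_const fun _ => Or.inr hκ0)
      fun t => (rpow_pos_of_pos (hpos t) κ).ne'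
  exact ⟨a, a', fun t => ξ / a t ^ κ, fun t _ => ha t, fun t _ => ha' t, ha''_cont.continuousOn,
    fun t _ => hpos t, fun _ _ => rfl, h0, h1,
    Emden.tendsto_atTop_of_hasDerivAt hκ0 hξ (fun t _ => ha t) (fun t _ => ha' t)
      (fun t _ => hpos t) fun _ _ => rfl⟩
end

section
/- Let γ > 1, ξ < 0, a₀ > 0, a₁ < √(−2ξ/(γ−1)) · a₀^{(1−γ)/2}, and 0 < T < ∞. Suppose a : [0,T) → ℝ is twice continuously differentiable with a(t) > 0 and a''(t) = ξ / a(t)^γ for all t ∈ [0,T), a(0) = a₀, a'(0) = a₁, and a(t) → 0 as t → T⁻. Then a'(t)/a(t) → −∞ as t → T⁻. Consequently, for the constructed solution with velocity u(x,t) = (a'(t)/a(t)) x + b(t), the velocity gradient ∂u/∂x(x,t) = a'(t)/a(t) blows up (tends to −∞) as t → T⁻ at every spatial point x. -/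
/-!
Since `a'' = ξ / a^γ < 0`, the function `a` is concave, so `a'` is antitone. A positive function
that tends to `0` at `T` cannot be nondecreasing on `[0, T)`, so `a' (t₀) < 0` for some `t₀`, and
then `a' t / a t ≤ a' t₀ / a t → -∞` as `t → T⁻`.
-/

open Real Set Filter Topology

lemma monotoneOn_of_forall_hasDerivAt_nonneg {D : Set ℝ} (hD : Convex ℝ D) {f f' : ℝ → ℝ}
    (hf : ∀ x ∈ D, HasDerivAt f (f' x) x) (hf' : ∀ x ∈ D, 0 ≤ f' x) : MonotoneOn f D :=
  monotoneOn_of_hasDerivWithinAt_nonneg hD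
    (fun x hx ↦ (hf x hx).continuousAt.continuousWithinAt)
    (fun x hx ↦ (hf x (interior_subset hx)).hasDerivWithinAt)
    (fun x hx ↦ hf' x (interior_subset hx))

lemma antitoneOn_of_forall_hasDerivAt_nonpos {D : Set ℝ} (hD : Convex ℝ D) {f f' : ℝ → ℝ}
    (hf : ∀ x ∈ D, HasDerivAt f (f' x) x) (hf' : ∀ x ∈ D, f' x ≤ 0) : AntitoneOn f D :=
  antitoneOn_of_hasDerivWithinAt_nonpos hD
    (fun x hx ↦ (hf x hx).continuousAt.continuousWithinAt)
    (fun x hx ↦ (hf x (interior_subset hx)).hasDerivWithinAt)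
    (fun x hx ↦ hf' x (interior_subset hx))

lemma eventually_mem_Ico_nhdsLT {c T : ℝ} (hcT : c < T) : ∀ᶠ t in 𝓝[<] T, t ∈ Ico c T := by
  filter_upwards [Ioo_mem_nhdsLT hcT] with t ht using Ioo_subset_Ico_self ht

lemma exists_mem_Ico_deriv_neg_of_tendsto_nhdsLT {f f' : ℝ → ℝ} {c T l : ℝ} (hcT : c < T)
    (hf : ∀ t ∈ Ico c T, HasDerivAt f (f' t) t) (hlim : Tendsto f (𝓝[<] T) (𝓝 l))
    (hl : l < f c) : ∃ t ∈ Ico c T, f' t < 0 := by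
  by_contra! hf'
  have hmono := monotoneOn_of_forall_hasDerivAt_nonneg (convex_Ico c T) hf hf'
  have hle : ∀ᶠ t in 𝓝[<] T, f c ≤ f t := by
    filter_upwards [eventually_mem_Ico_nhdsLT hcT] with t ht
    exact hmono (left_mem_Ico.2 hcT) ht ht.1
  exact hl.not_ge (ge_of_tendsto hlim hle)

lemma tendsto_div_atBot_of_eventually_le_neg {α : Type*} {l : Filter α} {f g : α → ℝ} {c : ℝ}
    (hc : c < 0) (hg : ∀ᶠ x in l, g x ≤ c) (hf : Tendsto f l (𝓝[>] 0)) :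
    Tendsto (fun x ↦ g x / f x) l atBot := by
  refine tendsto_atBot_mono' l ?_ (hf.inv_tendsto_nhdsGT_zero.const_mul_atTop_of_neg hc)
  filter_upwards [hg, hf self_mem_nhdsWithin] with x hgx hfx
  rw [div_eq_mul_inv]
  exact mul_le_mul_of_nonneg_right hgx (inv_nonneg.2 (le_of_lt hfx))

theorem tendsto_deriv_div_atBot_of_tendsto_zero {f f' f'' : ℝ → ℝ} {c T : ℝ} (hcT : c < T)
    (hf : ∀ t ∈ Ico c T, HasDerivAt f (f' t) t) (hf' : ∀ t ∈ Ico c T, HasDerivAt f' (f'' t) t)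
    (hf'' : ∀ t ∈ Ico c T, f'' t ≤ 0) (hpos : ∀ t ∈ Ico c T, 0 < f t)
    (hlim : Tendsto f (𝓝[<] T) (𝓝 0)) :
    Tendsto (fun t ↦ f' t / f t) (𝓝[<] T) atBot := by
  obtain ⟨t₀, ht₀, hneg⟩ :=
    exists_mem_Ico_deriv_neg_of_tendsto_nhdsLT hcT hf hlim (hpos c (left_mem_Ico.2 hcT))
  have hanti := antitoneOn_of_forall_hasDerivAt_nonpos (convex_Ico c T) hf' hf''
  have hle : ∀ᶠ t in 𝓝[<] T, f' t ≤ f' t₀ := by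
    filter_upwards [eventually_mem_Ico_nhdsLT ht₀.2] with t ht
    exact hanti ht₀ ⟨ht₀.1.trans ht.1, ht.2⟩ ht.1
  have hlim' : Tendsto f (𝓝[<] T) (𝓝[>] 0) :=
    tendsto_nhdsWithin_of_tendsto_nhds_of_eventually_within _ hlim <| by
      filter_upwards [eventually_mem_Ico_nhdsLT hcT] with t ht using hpos t ht
  exact tendsto_div_atBot_of_eventually_le_neg hneg hle hlim'

theorem velocity_gradient_blowup_general
    (γ ξ T : ℝ) (hξ : ξ < 0)
    (hT : 0 < T)
    (a a' a'' b : ℝ → ℝ)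
    (ha : ∀ t ∈ Set.Ico 0 T, HasDerivAt a (a' t) t)
    (ha' : ∀ t ∈ Set.Ico 0 T, HasDerivAt a' (a'' t) t)
    (hpos : ∀ t ∈ Set.Ico 0 T, 0 < a t)
    (hODE : ∀ t ∈ Set.Ico 0 T, a'' t = ξ / a t ^ γ)
    (hlim : Filter.Tendsto a (nhdsWithin T (Set.Iio T)) (nhds 0))
    (u : ℝ → ℝ → ℝ)
    (hu : u = fun x t => (a' t / a t) * x + b t) :
    Filter.Tendsto (fun t => a' t / a t) (nhdsWithin T (Set.Iio T)) Filter.atBot ∧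
    ∀ x : ℝ, Filter.Tendsto (fun t => deriv (fun y => u y t) x)
      (nhdsWithin T (Set.Iio T)) Filter.atBot := by
  have ha'' : ∀ t ∈ Ico 0 T, a'' t ≤ 0 := fun t ht ↦ by
    rw [hODE t ht]
    exact (div_neg_of_neg_of_pos hξ (rpow_pos_of_pos (hpos t ht) γ)).le
  have hblowup := tendsto_deriv_div_atBot_of_tendsto_zero hT ha ha' ha'' hpos hlim
  refine ⟨hblowup, fun x ↦ ?_⟩
  have hgrad : ∀ t, deriv (fun y ↦ u y t) x = a' t / a t := fun t ↦ by
    simp only [hu, deriv_add_const, deriv_const_mul_id]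
  simpa only [hgrad] using hblowup

/-- In the blowup case of the Emden equation, if the positive solution `a`
on `[0,T)` tends to `0` as `t → T⁻`, then `a'(t)/a(t) → −∞` as `t → T⁻`;
consequently the velocity gradient `∂u/∂x(x,t) = a'(t)/a(t)` of the
constructed solution `u(x,t) = (a'(t)/a(t))x + b(t)` blows up (tends to `−∞`)
at every spatial point `x` as `t → T⁻`. -/
theorem velocity_gradient_blowup
    (γ ξ a₀ a₁ T : ℝ) (hγ : 1 < γ) (hξ : ξ < 0) (ha₀ : 0 < a₀)
    (ha₁ : a₁ < Real.sqrt (-2 * ξ / (γ - 1)) * a₀ ^ ((1 - γ) / 2))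
    (hT : 0 < T)
    (a a' a'' b : ℝ → ℝ)
    (ha : ∀ t ∈ Set.Ico 0 T, HasDerivAt a (a' t) t)
    (ha' : ∀ t ∈ Set.Ico 0 T, HasDerivAt a' (a'' t) t)
    (ha''c : ContinuousOn a'' (Set.Ico 0 T))
    (hpos : ∀ t ∈ Set.Ico 0 T, 0 < a t)
    (hODE : ∀ t ∈ Set.Ico 0 T, a'' t = ξ / a t ^ γ)
    (h0 : a 0 = a₀) (h1 : a' 0 = a₁)
    (hlim : Filter.Tendsto a (nhdsWithin T (Set.Iio T)) (nhds 0))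
    (u : ℝ → ℝ → ℝ)
    (hu : u = fun x t => (a' t / a t) * x + b t) :
    Filter.Tendsto (fun t => a' t / a t) (nhdsWithin T (Set.Iio T)) Filter.atBot ∧
    ∀ x : ℝ, Filter.Tendsto (fun t => deriv (fun y => u y t) x)
      (nhdsWithin T (Set.Iio T)) Filter.atBot :=
  velocity_gradient_blowup_general γ ξ T hξ hT a a' a'' b ha ha' hpos hODE hlim u hu
end
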